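/- arXiv:1410.1859 — 7 statements merged into one kernel-verified Lean document; each statement's English description precedes it below -/
import Mathlib

section
/- Hoeffding's Inequality: if X_1, …, X_n are i.i.d. real-valued random variables on a probability space (Ω, μ) taking values in the interval [a,b] almost surely (with a < b), and S_n = X_1 + ⋯ + X_n, then for every ε > 0, μ({ω : |S_n(ω) − E[S_n]|/n ≥ ε}) ≤ 2·exp(−2nε²/(b−a)²). -/
/-!
By Hoeffding's lemma each centred summand `X i - E[X i]` is sub-Gaussian with variance proxy
`((b - a) / 2) ^ 2`; variance proxies of independent variables add, so the centred sum is
sub-Gaussian with proxy `n (b - a) ^ 2 / 4`, and the Chernoff bound on each of the two tails gives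
`exp (-2 t ^ 2 / (n (b - a) ^ 2))` at `t = n ε`.
-/

open MeasureTheory ProbabilityTheory
open scoped NNReal

namespace ProbabilityTheory

variable {Ω : Type*} [MeasurableSpace Ω] {μ : Measure Ω}

lemma HasSubgaussianMGF.measureReal_abs_ge_le [IsFiniteMeasure μ] {X : Ω → ℝ} {c : ℝ≥0}
    (h : HasSubgaussianMGF X c μ) {ε : ℝ} (hε : 0 ≤ ε) :
    μ.real {ω | ε ≤ |X ω|} ≤ 2 * Real.exp (-ε ^ 2 / (2 * c)) := by
  have hsplit : {ω | ε ≤ |X ω|} = {ω | ε ≤ X ω} ∪ {ω | ε ≤ (-X) ω} := by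
    ext ω
    simp only [le_abs', Set.mem_ofPred_eq, Set.mem_union, Pi.neg_apply, le_neg]
    exact or_comm
  calc μ.real {ω | ε ≤ |X ω|}
      ≤ μ.real {ω | ε ≤ X ω} + μ.real {ω | ε ≤ (-X) ω} := hsplit ▸ measureReal_union_le _ _
    _ ≤ Real.exp (-ε ^ 2 / (2 * c)) + Real.exp (-ε ^ 2 / (2 * c)) :=
        add_le_add (h.measure_ge_le hε) (h.neg.measure_ge_le hε)
    _ = 2 * Real.exp (-ε ^ 2 / (2 * c)) := (two_mul _).symm

section IndependentBounded

variable [IsProbabilityMeasure μ] {ι : Type*} [Fintype ι] {X : ι → Ω → ℝ} {a b : ℝ}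

lemma hasSubgaussianMGF_sum_sub_integral_of_mem_Icc (hindep : iIndepFun X μ)
    (hmeas : ∀ i, AEMeasurable (X i) μ) (hbdd : ∀ i, ∀ᵐ ω ∂μ, X i ω ∈ Set.Icc a b) :
    HasSubgaussianMGF (fun ω ↦ ∑ i, X i ω - ∫ ω', ∑ i, X i ω' ∂μ)
      (Fintype.card ι * (‖b - a‖₊ / 2) ^ 2) μ := by
  have hcentered_indep : iIndepFun (fun i ↦ (· - μ[X i]) ∘ X i) μ :=
    hindep.comp _ fun _ ↦ measurable_id.sub_const _
  have hsum := HasSubgaussianMGF.sum_of_iIndepFun hcentered_indep (s := Finset.univ)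
    fun i _ ↦ hasSubgaussianMGF_of_mem_Icc (hmeas i) (hbdd i)
  have hint : ∀ i, Integrable (X i) μ := fun i ↦ Integrable.of_mem_Icc a b (hmeas i) (hbdd i)
  rw [Finset.sum_const, nsmul_eq_mul, Finset.card_univ] at hsum
  refine hsum.congr (ae_of_all _ fun ω ↦ ?_)
  simp only [Function.comp_apply, Finset.sum_sub_distrib,
    integral_finsetSum _ fun i _ ↦ hint i]

lemma measureReal_abs_sum_sub_integral_ge_le (hindep : iIndepFun X μ)
    (hmeas : ∀ i, AEMeasurable (X i) μ) (hbdd : ∀ i, ∀ᵐ ω ∂μ, X i ω ∈ Set.Icc a b)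
    {t : ℝ} (ht : 0 ≤ t) :
    μ.real {ω | t ≤ |∑ i, X i ω - ∫ ω', ∑ i, X i ω' ∂μ|}
      ≤ 2 * Real.exp (-2 * t ^ 2 / (Fintype.card ι * (b - a) ^ 2)) := by
  have hbound :=
    (hasSubgaussianMGF_sum_sub_integral_of_mem_Icc hindep hmeas hbdd).measureReal_abs_ge_le ht
  have hproxy : -t ^ 2 / (2 * ((Fintype.card ι * (‖b - a‖₊ / 2) ^ 2 : ℝ≥0) : ℝ))
      = -2 * t ^ 2 / (Fintype.card ι * (b - a) ^ 2) := by
    push_cast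
    rw [Real.norm_eq_abs, div_pow, sq_abs]
    field_simp
  rwa [hproxy] at hbound

end IndependentBounded

end ProbabilityTheory

theorem hoeffding_inequality_general
    {Ω : Type*} [MeasurableSpace Ω] (μ : Measure Ω) [IsProbabilityMeasure μ]
    (n : ℕ) (X : Fin n → Ω → ℝ) (a b : ℝ)
    (hmeas : ∀ i, Measurable (X i))
    (hindep : iIndepFun X μ)
    (hbdd : ∀ i, ∀ᵐ ω ∂μ, X i ω ∈ Set.Icc a b)
    (ε : ℝ) (hε : 0 < ε) :
    μ {ω | ε ≤ |(∑ i, X i ω) - ∫ ω', (∑ i, X i ω') ∂μ| / n}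
      ≤ ENNReal.ofReal (2 * Real.exp (-2 * n * ε ^ 2 / (b - a) ^ 2)) := by
  have hsum := measureReal_abs_sum_sub_integral_ge_le hindep (fun i ↦ (hmeas i).aemeasurable)
    hbdd (t := ε * n) (by positivity)
  have hexponent : -2 * (ε * n) ^ 2 / (n * (b - a) ^ 2) = -2 * n * ε ^ 2 / (b - a) ^ 2 := by
    rcases eq_or_ne (n : ℝ) 0 with hn | hn
    · simp [hn]
    · field_simp
  rw [Fintype.card_fin, hexponent] at hsum
  calc μ {ω | ε ≤ |(∑ i, X i ω) - ∫ ω', (∑ i, X i ω') ∂μ| / n}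
      ≤ μ {ω | ε * n ≤ |(∑ i, X i ω) - ∫ ω', (∑ i, X i ω') ∂μ|} :=
        measure_mono <| Set.ofPred_subset_ofPred.2 fun _ ↦
          mul_le_of_le_div₀ (abs_nonneg _) n.cast_nonneg
    _ = ENNReal.ofReal (μ.real {ω | ε * n ≤ |(∑ i, X i ω) - ∫ ω', (∑ i, X i ω') ∂μ|}) :=
        (ofReal_measureReal).symm
    _ ≤ ENNReal.ofReal (2 * Real.exp (-2 * n * ε ^ 2 / (b - a) ^ 2)) :=
        ENNReal.ofReal_le_ofReal hsum

/-- Hoeffding's Inequality: if `X 1, …, X n` are i.i.d. real-valued random variables on a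
probability space `(Ω, μ)` taking values in `[a, b]` almost surely (with `a < b`), and
`S n = X 1 + ⋯ + X n`, then for every `ε > 0`,
`μ {ω | |S n ω − E[S n]| / n ≥ ε} ≤ 2 exp(−2 n ε² / (b − a)²)`. -/
theorem hoeffding_inequality
    {Ω : Type*} [MeasurableSpace Ω] (μ : Measure Ω) [IsProbabilityMeasure μ]
    (n : ℕ) (X : Fin n → Ω → ℝ) (a b : ℝ) (hab : a < b)
    (hmeas : ∀ i, Measurable (X i))
    (hindep : iIndepFun X μ)
    (hident : ∀ i j, IdentDistrib (X i) (X j) μ μ)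
    (hbdd : ∀ i, ∀ᵐ ω ∂μ, X i ω ∈ Set.Icc a b)
    (ε : ℝ) (hε : 0 < ε) :
    μ {ω | ε ≤ |(∑ i, X i ω) - ∫ ω', (∑ i, X i ω') ∂μ| / n}
      ≤ ENNReal.ofReal (2 * Real.exp (-2 * n * ε ^ 2 / (b - a) ^ 2)) :=
  hoeffding_inequality_general μ n X a b hmeas hindep hbdd ε hε
end

section
/- Maximal inequality for the fair-coin walk: there exists a constant c > 0, independent of x and n, such that for every real x > 0 and every n ∈ ℕ, μ({X ∈ 2^ℕ : ∃ k ≤ n, S_k(X) − k/2 > x}) ≤ (1/c)·μ({X ∈ 2^ℕ : S_n(X) − n/2 > x}). -/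
open MeasureTheory Filter

/-- The sum of the first `n` coordinates of a point of Cantor space, as a real number. -/
noncomputable def coinSum (X : ℕ → Bool) (n : ℕ) : ℝ :=
  ∑ i ∈ Finset.range n, ((X i).toNat : ℝ)

/-- `μ` is the fair-coin measure on Cantor space: the probability measure under which the
coordinates are i.i.d. Bernoulli(1/2), i.e. every finite cylinder determined by prescribing
the coordinates in a finite set `s` has measure `(1/2)^|s|`. -/
def IsFairCoin (μ : Measure (ℕ → Bool)) : Prop :=
  IsProbabilityMeasure μ ∧
    ∀ (s : Finset ℕ) (f : ℕ → Bool),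
      μ {X | ∀ i ∈ s, X i = f i} = (1 / 2) ^ s.card

open scoped Classical ENNReal

namespace MaxIneqAux

noncomputable section

/-- Extend a finite bit vector by `false`. -/
def ext (n : ℕ) (g : Fin n → Bool) : ℕ → Bool :=
  fun i => if h : i < n then g ⟨i, h⟩ else false

lemma coinSum_congr {X Y : ℕ → Bool} {k : ℕ} (h : ∀ i < k, X i = Y i) :
    coinSum X k = coinSum Y k := by
  unfold coinSum
  exact Finset.sum_congr rfl fun i hi => by rw [h i (Finset.mem_range.1 hi)]

lemma coinSum_split (X : ℕ → Bool) {k n : ℕ} (h : k ≤ n) :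
    coinSum X n = coinSum X k + ∑ i ∈ Finset.Ico k n, ((X i).toNat : ℝ) := by
  unfold coinSum
  simp only [Finset.range_eq_Ico]
  exact (Finset.sum_Ico_consecutive _ (Nat.zero_le k) h).symm

/-- Flip all bits with index `≥ k`. -/
def flipF (n k : ℕ) (g : Fin n → Bool) : Fin n → Bool :=
  fun i => if k ≤ (i : ℕ) then !(g i) else g i

lemma ext_flipF_lt {n k : ℕ} (g : Fin n → Bool) {i : ℕ} (h : i < k) :
    ext n (flipF n k g) i = ext n g i := by
  unfold ext flipF
  split
  · simp [Nat.not_le.2 h]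
  · rfl

lemma ext_flipF_ge {n k : ℕ} (g : Fin n → Bool) {i : ℕ} (h1 : k ≤ i) (h2 : i < n) :
    ext n (flipF n k g) i = !(ext n g i) := by
  unfold ext flipF
  rw [dif_pos h2, dif_pos h2]
  simp [h1]

lemma flipF_flipF {n k : ℕ} (g : Fin n → Bool) : flipF n k (flipF n k g) = g := by
  funext i
  unfold flipF
  split <;> simp

/-- The predicate: the walk exceeds `x` at some time `≤ n`. -/
def pp (x : ℝ) (n : ℕ) (g : Fin n → Bool) : Prop :=
  ∃ k, k ≤ n ∧ x < coinSum (ext n g) k - (k : ℝ) / 2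

/-- The reflection map. -/
def phi (x : ℝ) (n : ℕ) (g : Fin n → Bool) : Fin n → Bool :=
  if hg : pp x n g then
    if (n - Nat.find hg) ≤ 2 * ∑ i ∈ Finset.Ico (Nat.find hg) n, (ext n g i).toNat then g
    else flipF n (Nat.find hg) g
  else g

lemma phi_cases {x : ℝ} {n : ℕ} {g : Fin n → Bool} (hg : pp x n g) :
    phi x n g = g ∨ phi x n g = flipF n (Nat.find hg) g := by
  unfold phi
  rw [dif_pos hg]
  split
  · exact Or.inl rfl
  · exact Or.inr rfl

lemma phi_prefix {x : ℝ} {n : ℕ} {g : Fin n → Bool} (hg : pp x n g) :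
    ∀ i < Nat.find hg, ext n (phi x n g) i = ext n g i := by
  intro i hi
  rcases phi_cases hg with h | h
  · rw [h]
  · rw [h, ext_flipF_lt _ hi]

lemma phi_mem {x : ℝ} {n : ℕ} {g : Fin n → Bool} (hg : pp x n g) :
    x < coinSum (ext n (phi x n g)) n - (n : ℝ) / 2 := by
  have hspec := Nat.find_spec hg
  unfold phi
  rw [dif_pos hg]
  set k := Nat.find hg with hkdef
  obtain ⟨hkn, hcond⟩ := hspec
  set s : ℕ := ∑ i ∈ Finset.Ico k n, (ext n g i).toNat with hs
  have hsum_g : ∑ i ∈ Finset.Ico k n, ((ext n g i).toNat : ℝ) = (s : ℝ) := by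
    rw [hs]; push_cast; rfl
  have hnk : ((n - k : ℕ) : ℝ) = (n : ℝ) - (k : ℝ) := by
    push_cast [Nat.cast_sub hkn]; ring
  split_ifs with hcase
  · rw [coinSum_split _ hkn, hsum_g]
    have h1 : ((n - k : ℕ) : ℝ) ≤ 2 * (s : ℝ) := by exact_mod_cast hcase
    rw [hnk] at h1
    linarith [hcond]
  · rw [coinSum_split _ hkn]
    have hpre : coinSum (ext n (flipF n k g)) k = coinSum (ext n g) k :=
      coinSum_congr fun i hi => ext_flipF_lt _ hi
    have hsuf : ∑ i ∈ Finset.Ico k n, ((ext n (flipF n k g) i).toNat : ℝ)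
        = ((n - k : ℕ) : ℝ) - (s : ℝ) := by
      have hc : ∀ i ∈ Finset.Ico k n,
          ((ext n (flipF n k g) i).toNat : ℝ) = 1 - ((ext n g i).toNat : ℝ) := by
        intro i hi
        obtain ⟨h1, h2⟩ := Finset.mem_Ico.1 hi
        rw [ext_flipF_ge _ h1 h2]
        cases ext n g i <;> simp
      rw [Finset.sum_congr rfl hc, Finset.sum_sub_distrib, Finset.sum_const,
        Nat.card_Ico, hsum_g]
      simp
    rw [hpre, hsuf]
    have h1 : 2 * s < n - k := by omega
    have h2 : 2 * (s : ℝ) < ((n - k : ℕ) : ℝ) := by exact_mod_cast h1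
    rw [hnk] at h2 ⊢
    linarith [hcond]

lemma tau_eq {x : ℝ} {n : ℕ} {g h : Fin n → Bool} (hg : pp x n g) (hh : pp x n h)
    (hagree : ∀ i < Nat.find hg, ext n h i = ext n g i) :
    Nat.find hh = Nat.find hg := by
  apply le_antisymm
  · apply Nat.find_min' hh
    refine ⟨(Nat.find_spec hg).1, ?_⟩
    have : coinSum (ext n h) (Nat.find hg) = coinSum (ext n g) (Nat.find hg) :=
      coinSum_congr fun i hi => hagree i hi
    rw [this]
    exact (Nat.find_spec hg).2
  · by_contra hlt
    push_neg at hlt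
    have hmin := Nat.find_min hg hlt
    apply hmin
    refine ⟨(Nat.find_spec hh).1, ?_⟩
    have : coinSum (ext n g) (Nat.find hh) = coinSum (ext n h) (Nat.find hh) :=
      coinSum_congr fun i hi => (hagree i (lt_trans hi hlt)).symm
    rw [this]
    exact (Nat.find_spec hh).2

/-- The combinatorial core: counting inequality via the reflection map. -/
lemma card_le (x : ℝ) (hx : 0 < x) (n : ℕ) :
    (Finset.univ.filter fun g : Fin n → Bool =>
        ∃ k ≤ n, x < coinSum (ext n g) k - (k : ℝ) / 2).card ≤
    2 * (Finset.univ.filter fun g : Fin n → Bool =>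
        x < coinSum (ext n g) n - (n : ℝ) / 2).card := by
  set FA := Finset.univ.filter fun g : Fin n → Bool =>
      ∃ k ≤ n, x < coinSum (ext n g) k - (k : ℝ) / 2 with hFA
  set FB := Finset.univ.filter fun g : Fin n → Bool =>
      x < coinSum (ext n g) n - (n : ℝ) / 2 with hFB
  have hmemA : ∀ g, g ∈ FA ↔ pp x n g := by
    intro g; rw [hFA, Finset.mem_filter]; simp [pp]
  have hmemB : ∀ g, g ∈ FB ↔ x < coinSum (ext n g) n - (n : ℝ) / 2 := by
    intro g; rw [hFB, Finset.mem_filter]; simp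
  have himg : ∀ g ∈ FA, phi x n g ∈ FB := by
    intro g hg
    exact (hmemB _).2 (phi_mem ((hmemA g).1 hg))
  calc FA.card ≤ 2 * (FA.image (phi x n)).card := by
        apply Finset.card_le_mul_card_image
        intro h hh
        -- h is in the image, hence in FB, hence satisfies pp
        obtain ⟨g0, hg0, hg0h⟩ := Finset.mem_image.1 hh
        have hhB : h ∈ FB := hg0h ▸ himg g0 hg0
        have hph : pp x n h := ⟨n, le_refl n, (hmemB h).1 hhB⟩
        have hsub : (FA.filter fun g => phi x n g = h) ⊆
            insert h {flipF n (Nat.find hph) h} := by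
          intro g hgmem
          obtain ⟨hgA, hgphi⟩ := Finset.mem_filter.1 hgmem
          have hpg : pp x n g := (hmemA g).1 hgA
          have hagree : ∀ i < Nat.find hpg, ext n h i = ext n g i := by
            intro i hi
            rw [← hgphi]
            exact phi_prefix hpg i hi
          have htau : Nat.find hph = Nat.find hpg := tau_eq hpg hph hagree
          rcases phi_cases hpg with hc | hc
          · rw [hc] at hgphi
            exact Finset.mem_insert.2 (Or.inl hgphi)
          · rw [hc] at hgphi
            have hgeq : g = flipF n (Nat.find hpg) h := by
              rw [← hgphi, flipF_flipF]
            rw [htau]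
            exact Finset.mem_insert.2 (Or.inr (Finset.mem_singleton.2 hgeq))
        calc (FA.filter fun g => phi x n g = h).card
            ≤ (insert h ({flipF n (Nat.find hph) h} : Finset (Fin n → Bool))).card :=
              Finset.card_le_card hsub
          _ ≤ 2 := by
              refine le_trans (Finset.card_insert_le _ _) ?_
              simp
    _ ≤ 2 * FB.card := by
        apply Nat.mul_le_mul_left
        apply Finset.card_le_card
        intro h hh
        obtain ⟨g0, hg0, hg0h⟩ := Finset.mem_image.1 hh
        exact hg0h ▸ himg g0 hg0

/-- Measure of an event depending only on coordinates `< n`. -/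
lemma measure_eq (μ : Measure (ℕ → Bool)) (hμ : IsFairCoin μ) (n : ℕ)
    (P : (ℕ → Bool) → Prop)
    (hP : ∀ X Y : ℕ → Bool, (∀ i, i < n → X i = Y i) → P X → P Y) :
    μ {X | P X} =
      ((Finset.univ.filter fun g : Fin n → Bool => P (ext n g)).card : ℝ≥0∞)
        * (1 / 2 : ℝ≥0∞) ^ n := by
  set F := Finset.univ.filter fun g : Fin n → Bool => P (ext n g) with hF
  have hset : {X | P X} = ⋃ g ∈ F, {X : ℕ → Bool | ∀ i ∈ Finset.range n, X i = ext n g i} := by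
    ext X
    simp only [Set.mem_setOf_eq, Set.mem_iUnion]
    constructor
    · intro hX
      refine ⟨fun i => X i, ?_, ?_⟩
      · rw [hF, Finset.mem_filter]
        refine ⟨Finset.mem_univ _, ?_⟩
        apply hP X _ _ hX
        intro i hi
        simp [ext, hi]
      · intro i hi
        simp [ext, Finset.mem_range.1 hi]
    · rintro ⟨g, hgF, hXg⟩
      rw [hF, Finset.mem_filter] at hgF
      apply hP (ext n g) X _ hgF.2
      intro i hi
      exact (hXg i (Finset.mem_range.2 hi)).symm
  rw [hset]
  rw [measure_biUnion_finset]
  · have hcyl : ∀ g ∈ F, μ {X : ℕ → Bool | ∀ i ∈ Finset.range n, X i = ext n g i}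
        = (1 / 2 : ℝ≥0∞) ^ n := by
      intro g _
      rw [hμ.2 (Finset.range n) (ext n g), Finset.card_range]
    rw [Finset.sum_congr rfl hcyl, Finset.sum_const, nsmul_eq_mul]
  · intro g _ g' _ hne
    simp only [Function.onFun]
    rw [Set.disjoint_left]
    intro X h1 h2
    apply hne
    funext i
    have e1 : X i.1 = ext n g i.1 := h1 i.1 (Finset.mem_range.2 i.2)
    have e2 : X i.1 = ext n g' i.1 := h2 i.1 (Finset.mem_range.2 i.2)
    have e3 : ext n g i.1 = ext n g' i.1 := e1 ▸ e2
    simpa [ext, i.2] using e3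
  · intro g _
    have : {X : ℕ → Bool | ∀ i ∈ Finset.range n, X i = ext n g i}
        = ⋂ i ∈ Finset.range n, {X : ℕ → Bool | X i = ext n g i} := by
      ext X; simp
    rw [this]
    apply Set.Finite.measurableSet_biInter (Finset.finite_toSet _)
    intro i _
    have he : {X : ℕ → Bool | X i = ext n g i} = (fun X : ℕ → Bool => X i) ⁻¹' {ext n g i} := rfl
    rw [he]
    exact (measurable_pi_apply i) (measurableSet_singleton _)

end

end MaxIneqAux

/-- Maximal inequality for the fair-coin walk: there is a constant `c > 0`, independent of
`x` and `n`, such that for every `x > 0` and every `n`,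
`μ {X | ∃ k ≤ n, S k X − k/2 > x} ≤ (1/c) · μ {X | S n X − n/2 > x}`. -/
theorem maximal_inequality (μ : Measure (ℕ → Bool)) (hμ : IsFairCoin μ) :
    ∃ c : ℝ, 0 < c ∧ ∀ x : ℝ, 0 < x → ∀ n : ℕ,
      μ {X | ∃ k ≤ n, x < coinSum X k - k / 2}
        ≤ ENNReal.ofReal (1 / c) * μ {X | x < coinSum X n - n / 2} := by
  refine ⟨1 / 2, by norm_num, ?_⟩
  intro x hx n
  have hPA : ∀ X Y : ℕ → Bool, (∀ i, i < n → X i = Y i) →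
      (∃ k ≤ n, x < coinSum X k - (k : ℝ) / 2) → (∃ k ≤ n, x < coinSum Y k - (k : ℝ) / 2) := by
    rintro X Y hXY ⟨k, hk, hxk⟩
    refine ⟨k, hk, ?_⟩
    rw [MaxIneqAux.coinSum_congr fun i hi => (hXY i (lt_of_lt_of_le hi hk)).symm]
    exact hxk
  have hPB : ∀ X Y : ℕ → Bool, (∀ i, i < n → X i = Y i) →
      (x < coinSum X n - (n : ℝ) / 2) → (x < coinSum Y n - (n : ℝ) / 2) := by
    intro X Y hXY hPX
    rw [MaxIneqAux.coinSum_congr fun i hi => (hXY i hi).symm]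
    exact hPX
  have hA := MaxIneqAux.measure_eq μ hμ n
    (fun X => ∃ k ≤ n, x < coinSum X k - (k : ℝ) / 2) hPA
  have hB := MaxIneqAux.measure_eq μ hμ n
    (fun X => x < coinSum X n - (n : ℝ) / 2) hPB
  rw [hA, hB]
  have hcard := MaxIneqAux.card_le x hx n
  have h2 : ENNReal.ofReal (1 / (1 / 2 : ℝ)) = 2 := by
    norm_num
  rw [h2, ← mul_assoc]
  apply mul_le_mul_left
  have hle : ((Finset.univ.filter fun g : Fin n → Bool =>
          ∃ k ≤ n, x < coinSum (MaxIneqAux.ext n g) k - (k : ℝ) / 2).card : ℝ≥0∞)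
      ≤ 2 * ((Finset.univ.filter fun g : Fin n → Bool =>
          x < coinSum (MaxIneqAux.ext n g) n - (n : ℝ) / 2).card : ℝ≥0∞) := by
    exact_mod_cast hcard
  convert hle using 4
end

section
/- Upper half of the Law of the Iterated Logarithm: for μ-almost every X ∈ 2^ℕ, for every real λ > 1 there exists N ∈ ℕ such that for all n > N, S_n(X) ≤ n/2 + λ·√((n/2)·log log n). -/
/-!
Under the fair coin, `exp (s (S_k - k/2)) / cosh (s/2) ^ k` is a nonnegative martingale started
at `1`. Events depending on the first `n` coordinates are counted over the `2 ^ n` subsets of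
`range n`, and optional stopping at level `a` shows that the martingale reaches `a` before time `n`
with probability at most `1 / a` (Ville's inequality). With `cosh x ≤ exp (x ^ 2 / 2)` and
`s = 4t/n` this is the maximal Hoeffding bound `P(max_{k ≤ n} (S_k - k/2) ≥ t) ≤ exp (-2t²/n)`.

For `λ > 1`, test the block `λ ^ j ≤ n < λ ^ (j + 1)` against the envelope at its left end,
`λ √((λ ^ j / 2) log log λ ^ j)`, which suffices because the envelope is increasing in `n`. The
bound becomes `(j log λ) ^ (-λ)`, which is summable, so by Borel–Cantelli almost surely only
finitely many blocks fail. Countably many `λ = 1 + 1/(m+1)` then give all `λ > 1` at once.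
-/

open MeasureTheory Filter

open Finset Function Real

def Finset.boolIndicator {α : Type*} [DecidableEq α] (s : Finset α) : α → Bool :=
  fun i => decide (i ∈ s)

theorem Finset.boolIndicator_insert {α : Type*} [DecidableEq α] (s : Finset α) (a : α) :
    (insert a s).boolIndicator = update s.boolIndicator a true := by
  funext i
  by_cases h : i = a <;> simp [boolIndicator, update, h]

theorem Finset.update_boolIndicator_of_notMem {α : Type*} [DecidableEq α] {s : Finset α}
    {a : α} (h : a ∉ s) : update s.boolIndicator a false = s.boolIndicator :=
  update_eq_self_iff.2 (by simp [boolIndicator, h])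

theorem IsFairCoin.measureReal_cylinder {μ : Measure (ℕ → Bool)} (hμ : IsFairCoin μ)
    (s : Finset ℕ) (f : ℕ → Bool) : μ.real {X | ∀ i ∈ s, X i = f i} = (1 / 2) ^ #s := by
  simp [measureReal_def, hμ.2]

theorem measurableSet_cylinder (s : Finset ℕ) (f : ℕ → Bool) :
    MeasurableSet {X : ℕ → Bool | ∀ i ∈ s, X i = f i} :=
  MeasurableSet.pi s.countable_toSet fun i _ => measurableSet_singleton (f i)

theorem IsFairCoin.measureReal_eq_card {μ : Measure (ℕ → Bool)} (hμ : IsFairCoin μ) {n : ℕ}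
    {p : (ℕ → Bool) → Prop} [DecidablePred p]
    (hp : ∀ X Y, (∀ i < n, X i = Y i) → p X → p Y) :
    μ.real {X | p X} = #{s ∈ (range n).powerset | p s.boolIndicator} / 2 ^ n := by
  set F : Finset (Finset ℕ) := {s ∈ (range n).powerset | p s.boolIndicator} with hF
  have hunion : {X | p X} = ⋃ s ∈ F, {X | ∀ i ∈ range n, X i = s.boolIndicator i} := by
    ext X
    simp only [hF, Set.mem_ofPred_eq, Set.mem_iUnion, mem_filter, mem_powerset, mem_range,
      exists_prop]
    constructor
    · intro hX
      have hagree : ∀ i < n, X i = boolIndicator {i ∈ range n | X i} i := by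
        intro i hi; simp [boolIndicator, hi]
      exact ⟨_, ⟨filter_subset _ _, hp X _ hagree hX⟩, hagree⟩
    · rintro ⟨s, ⟨-, hs⟩, hX⟩
      exact hp _ X (fun i hi => (hX i hi).symm) hs
  have hdisj : (F : Set (Finset ℕ)).PairwiseDisjoint
      fun s => {X : ℕ → Bool | ∀ i ∈ range n, X i = s.boolIndicator i} := by
    intro s hs t ht hst
    refine Set.disjoint_left.2 fun X hXs hXt => hst (Finset.ext fun i => ?_)
    simp only [hF, coe_filter, mem_powerset, Set.mem_ofPred_eq] at hs ht
    by_cases hi : i ∈ range n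
    · simpa [boolIndicator] using (hXs i hi).symm.trans (hXt i hi)
    · exact iff_of_false (fun h => hi (hs.1 h)) (fun h => hi (ht.1 h))
  have := hμ.1
  rw [hunion, measureReal_biUnion_finset hdisj (fun s _ => measurableSet_cylinder _ _),
    sum_congr rfl fun s _ => hμ.measureReal_cylinder _ s.boolIndicator, sum_const, card_range,
    nsmul_eq_mul, one_div, inv_pow, div_eq_mul_inv]

/-- A martingale for the coordinate filtration of the fair coin. -/
structure IsCoinMartingale (M : ℕ → (ℕ → Bool) → ℝ) : Prop where
  adapted : ∀ n X Y, (∀ i < n, X i = Y i) → M n X = M n Y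
  update_add_update : ∀ n X,
    M (n + 1) (update X n false) + M (n + 1) (update X n true) = 2 * M n X

theorem IsCoinMartingale.sum_powerset {M : ℕ → (ℕ → Bool) → ℝ} (hM : IsCoinMartingale M)
    (n : ℕ) (X : ℕ → Bool) :
    ∑ s ∈ (range n).powerset, M n s.boolIndicator = 2 ^ n * M 0 X := by
  induction n with
  | zero => simp [hM.adapted 0 _ X fun i hi => (Nat.not_lt_zero i hi).elim]
  | succ n ih =>
    rw [range_add_one, sum_powerset_insert notMem_range_self, ← sum_add_distrib]
    calc ∑ s ∈ (range n).powerset,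
          (M (n + 1) s.boolIndicator + M (n + 1) (insert n s).boolIndicator)
        = ∑ s ∈ (range n).powerset, 2 * M n s.boolIndicator := by
          refine sum_congr rfl fun s hs => ?_
          have hn : n ∉ s := fun h => notMem_range_self (mem_powerset.1 hs h)
          rw [boolIndicator_insert, ← hM.update_add_update, update_boolIndicator_of_notMem hn]
      _ = 2 ^ (n + 1) * M 0 X := by rw [← mul_sum, ih, pow_succ]; ring

open Classical in
noncomputable def stoppedAtLevel (M : ℕ → (ℕ → Bool) → ℝ) (a : ℝ) : ℕ → (ℕ → Bool) → ℝ
  | 0, X => M 0 X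
  | n + 1, X => if ∃ k ≤ n, a ≤ M k X then stoppedAtLevel M a n X else M (n + 1) X

section stoppedAtLevel

variable {M : ℕ → (ℕ → Bool) → ℝ} {a : ℝ}

theorem stoppedAtLevel_eq_of_forall_lt {n : ℕ} {X : ℕ → Bool} (h : ∀ k ≤ n, M k X < a) :
    stoppedAtLevel M a n X = M n X := by
  cases n with
  | zero => rfl
  | succ n =>
    rw [stoppedAtLevel, if_neg]
    rintro ⟨k, hk, hak⟩
    exact (h k (hk.trans n.le_succ)).not_ge hak

theorem le_stoppedAtLevel {n : ℕ} {X : ℕ → Bool} (h : ∃ k ≤ n, a ≤ M k X) :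
    a ≤ stoppedAtLevel M a n X := by
  induction n with
  | zero =>
    obtain ⟨k, hk, hak⟩ := h
    rwa [Nat.le_zero.1 hk] at hak
  | succ n ih =>
    rw [stoppedAtLevel]
    split_ifs with hn
    · exact ih hn
    · obtain ⟨k, hk, hak⟩ := h
      obtain rfl : k = n + 1 := by
        by_contra hkn
        exact hn ⟨k, Nat.lt_succ_iff.1 (lt_of_le_of_ne hk hkn), hak⟩
      exact hak

theorem stoppedAtLevel_nonneg (hM : ∀ n X, 0 ≤ M n X) (n : ℕ) (X : ℕ → Bool) :
    0 ≤ stoppedAtLevel M a n X := by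
  induction n with
  | zero => exact hM 0 X
  | succ n ih =>
    rw [stoppedAtLevel]
    split_ifs
    exacts [ih, hM _ X]

theorem IsCoinMartingale.exists_le_congr (hM : IsCoinMartingale M) {n : ℕ} {X Y : ℕ → Bool}
    (h : ∀ i < n, X i = Y i) : (∃ k ≤ n, a ≤ M k X) ↔ ∃ k ≤ n, a ≤ M k Y := by
  refine exists_congr fun k => and_congr_right fun hk => ?_
  rw [hM.adapted k X Y fun i hi => h i (hi.trans_le hk)]

theorem isCoinMartingale_stoppedAtLevel (hM : IsCoinMartingale M) :
    IsCoinMartingale (stoppedAtLevel M a) := by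
  have adapted : ∀ n X Y, (∀ i < n, X i = Y i) →
      stoppedAtLevel M a n X = stoppedAtLevel M a n Y := by
    intro n
    induction n with
    | zero => exact fun X Y h => hM.adapted 0 X Y h
    | succ n ih =>
      intro X Y h
      have h' : ∀ i < n, X i = Y i := fun i hi => h i (hi.trans n.lt_succ_self)
      simp only [stoppedAtLevel, hM.exists_le_congr h', ih X Y h', hM.adapted _ X Y h]
  refine ⟨adapted, fun n X => ?_⟩
  have hbelow : ∀ b, ∀ i < n, update X n b i = X i := fun b i hi => update_of_ne hi.ne _ _
  simp only [stoppedAtLevel, hM.exists_le_congr (hbelow _), adapted n _ X (hbelow _)]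
  split_ifs with hstop
  · ring
  · push Not at hstop
    rw [hM.update_add_update, stoppedAtLevel_eq_of_forall_lt hstop]

end stoppedAtLevel

theorem IsFairCoin.maximal_ineq {μ : Measure (ℕ → Bool)} (hμ : IsFairCoin μ)
    {M : ℕ → (ℕ → Bool) → ℝ} (hM : IsCoinMartingale M) (hM_nonneg : ∀ n X, 0 ≤ M n X)
    (hM_zero : ∀ X, M 0 X = 1) {a : ℝ} (ha : 0 < a) (n : ℕ) :
    μ.real {X | ∃ k ≤ n, a ≤ M k X} ≤ 1 / a := by
  classical
  rw [hμ.measureReal_eq_card fun X Y h => (hM.exists_le_congr h).1,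
    div_le_div_iff₀ (by positivity) ha]
  calc (#{s ∈ (range n).powerset | ∃ k ≤ n, a ≤ M k s.boolIndicator} : ℝ) * a
      = ∑ s ∈ (range n).powerset with ∃ k ≤ n, a ≤ M k s.boolIndicator, a := by
        rw [sum_const, nsmul_eq_mul]
    _ ≤ ∑ s ∈ (range n).powerset with ∃ k ≤ n, a ≤ M k s.boolIndicator,
          stoppedAtLevel M a n s.boolIndicator :=
        sum_le_sum fun s hs => le_stoppedAtLevel (mem_filter.1 hs).2
    _ ≤ ∑ s ∈ (range n).powerset, stoppedAtLevel M a n s.boolIndicator :=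
        sum_le_sum_of_subset_of_nonneg (filter_subset _ _)
          fun s _ _ => stoppedAtLevel_nonneg hM_nonneg n _
    _ = 1 * 2 ^ n := by
        rw [(isCoinMartingale_stoppedAtLevel hM).sum_powerset n (fun _ => false)]
        simp [stoppedAtLevel, hM_zero]

theorem coinSum_congr {n : ℕ} {X Y : ℕ → Bool} (h : ∀ i < n, X i = Y i) :
    coinSum X n = coinSum Y n :=
  sum_congr rfl fun i hi => by rw [h i (mem_range.1 hi)]

theorem coinSum_update_succ (X : ℕ → Bool) (n : ℕ) (b : Bool) :
    coinSum (update X n b) (n + 1) = coinSum X n + b.toNat := by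
  rw [coinSum, sum_range_succ, update_self, ← coinSum,
    coinSum_congr fun i hi => update_of_ne hi.ne _ _]

noncomputable def expMartingale (s : ℝ) (n : ℕ) (X : ℕ → Bool) : ℝ :=
  exp (s * (coinSum X n - n / 2)) / cosh (s / 2) ^ n

theorem expMartingale_update_succ (s : ℝ) (n : ℕ) (X : ℕ → Bool) (b : Bool) :
    expMartingale s (n + 1) (update X n b)
      = expMartingale s n X * exp (s * (b.toNat - 1 / 2)) / cosh (s / 2) := by
  rw [expMartingale, expMartingale, coinSum_update_succ, pow_succ, div_mul_eq_mul_div,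
    div_div, ← exp_add]
  congr 2
  push_cast
  ring

theorem isCoinMartingale_expMartingale (s : ℝ) : IsCoinMartingale (expMartingale s) where
  adapted n X Y h := by rw [expMartingale, expMartingale, coinSum_congr h]
  update_add_update n X := by
    have hcosh : exp (s * ((false.toNat : ℝ) - 1 / 2)) + exp (s * ((true.toNat : ℝ) - 1 / 2))
        = 2 * cosh (s / 2) := by
      rw [cosh_eq]; norm_num; ring_nf
    rw [expMartingale_update_succ, expMartingale_update_succ, ← add_div, ← mul_add, hcosh]
    field_simp [(cosh_pos (s / 2)).ne']

theorem IsFairCoin.measureReal_exists_coinSum_sub_ge_le {μ : Measure (ℕ → Bool)}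
    (hμ : IsFairCoin μ) {t : ℝ} (ht : 0 ≤ t) (n : ℕ) :
    μ.real {X | ∃ k ≤ n, t ≤ coinSum X k - k / 2} ≤ exp (-(2 * t ^ 2 / n)) := by
  have := hμ.1
  set s := 4 * t / n
  have hs : 0 ≤ s := by positivity
  have hsub : {X | ∃ k ≤ n, t ≤ coinSum X k - k / 2}
      ⊆ {X | ∃ k ≤ n, exp (s * t) / cosh (s / 2) ^ n ≤ expMartingale s k X} := by
    rintro X ⟨k, hk, htk⟩
    exact ⟨k, hk, div_le_div₀ (exp_pos _).le (exp_le_exp.2 (mul_le_mul_of_nonneg_left htk hs))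
      (pow_pos (cosh_pos _) k) (pow_le_pow_right₀ (one_le_cosh _) hk)⟩
  have hexponent : n * ((s / 2) ^ 2 / 2) - s * t = -(2 * t ^ 2 / n) := by
    rcases n.eq_zero_or_pos with rfl | hn
    · simp [s]
    · simp only [s]; field_simp; ring
  calc μ.real {X | ∃ k ≤ n, t ≤ coinSum X k - k / 2}
      ≤ μ.real {X | ∃ k ≤ n, exp (s * t) / cosh (s / 2) ^ n ≤ expMartingale s k X} :=
        measureReal_mono hsub
    _ ≤ 1 / (exp (s * t) / cosh (s / 2) ^ n) :=
        hμ.maximal_ineq (isCoinMartingale_expMartingale s)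
          (fun k X => div_nonneg (exp_pos _).le (pow_pos (cosh_pos _) k).le)
          (fun X => by simp [expMartingale, coinSum]) (by positivity) n
    _ ≤ exp ((s / 2) ^ 2 / 2) ^ n / exp (s * t) := by
        rw [one_div_div]; gcongr; exact cosh_le_exp_half_sq _
    _ = exp (-(2 * t ^ 2 / n)) := by rw [← exp_nat_mul, ← exp_sub, hexponent]

theorem ae_eventually_notMem_of_summable {α : Type*} [MeasurableSpace α] {μ : Measure α}
    [IsFiniteMeasure μ] {s : ℕ → Set α} {b : ℕ → ℝ} (hb : Summable b)
    (hs : ∀ᶠ n in atTop, μ.real (s n) ≤ b n) : ∀ᵐ x ∂μ, ∀ᶠ n in atTop, x ∉ s n := by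
  have hsum : Summable fun n => μ.real (s n) :=
    hb.of_norm_bounded_eventually_nat
      (hs.mono fun n hn => by rwa [norm_of_nonneg measureReal_nonneg])
  refine ae_eventually_notMem ?_
  simp_rw [← fun n => ofReal_measureReal (μ := μ) (s := s n)]
  rw [← ENNReal.ofReal_tsum_of_nonneg (fun _ => measureReal_nonneg) hsum]
  exact ENNReal.ofReal_ne_top

noncomputable def lilBound (lam x : ℝ) : ℝ := lam * √(x / 2 * log (log x))

theorem lilBound_le_lilBound {lam x y : ℝ} (hlam : 0 ≤ lam) (hx : exp 1 ≤ x) (hxy : x ≤ y) :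
    lilBound lam x ≤ lilBound lam y := by
  have hx0 : 0 < x := (exp_pos 1).trans_le hx
  have hlogx : 1 ≤ log x := by rwa [le_log_iff_exp_le hx0]
  have hloglog : log (log x) ≤ log (log y) :=
    log_le_log (by linarith) (log_le_log hx0 hxy)
  unfold lilBound
  gcongr
  · exact log_nonneg hlogx
  · linarith

def lilBadEvent (lam : ℝ) (j : ℕ) : Set (ℕ → Bool) :=
  {X | ∃ k : ℕ, (k : ℝ) ≤ lam ^ (j + 1) ∧ lilBound lam (lam ^ j) ≤ coinSum X k - k / 2}

theorem IsFairCoin.measureReal_lilBadEvent_le {μ : Measure (ℕ → Bool)} (hμ : IsFairCoin μ)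
    {lam : ℝ} (hlam : 1 < lam) {j : ℕ} (hj : 1 ≤ j * log lam) :
    μ.real (lilBadEvent lam j) ≤ (j * log lam) ^ (-lam) := by
  set N := ⌊lam ^ (j + 1)⌋₊
  set t := lilBound lam (lam ^ j) with ht_def
  have hN : 0 < (N : ℝ) := Nat.cast_pos.2 (Nat.floor_pos.2 (one_le_pow₀ hlam.le))
  have hNle : (N : ℝ) ≤ lam ^ (j + 1) := Nat.floor_le (by positivity)
  have ht : t ^ 2 = lam ^ 2 * (lam ^ j / 2 * log (j * log lam)) := by
    rw [ht_def, lilBound, mul_pow, sq_sqrt, log_pow]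
    exact mul_nonneg (by positivity) (by rw [log_pow]; exact log_nonneg hj)
  have hevent : lilBadEvent lam j = {X | ∃ k ≤ N, t ≤ coinSum X k - k / 2} := by
    ext X
    simp only [lilBadEvent, Set.mem_ofPred_eq, N, t,
      Nat.le_floor_iff (by positivity : 0 ≤ lam ^ (j + 1))]
  have hexponent : lam * log (j * log lam) ≤ 2 * t ^ 2 / N :=
    calc lam * log (j * log lam) = 2 * t ^ 2 / lam ^ (j + 1) := by
          rw [ht, pow_succ]; field_simp; ring
      _ ≤ 2 * t ^ 2 / N := by gcongr
  calc μ.real (lilBadEvent lam j) ≤ exp (-(2 * t ^ 2 / N)) := by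
        rw [hevent]
        exact hμ.measureReal_exists_coinSum_sub_ge_le
          (mul_nonneg (by linarith) (sqrt_nonneg _)) N
    _ ≤ exp (log (j * log lam) * -lam) := by
        rw [exp_le_exp]; linarith
    _ = (j * log lam) ^ (-lam) := (rpow_def_of_pos (by linarith) _).symm

theorem IsFairCoin.ae_eventually_notMem_lilBadEvent {μ : Measure (ℕ → Bool)}
    (hμ : IsFairCoin μ) {lam : ℝ} (hlam : 1 < lam) :
    ∀ᵐ X ∂μ, ∀ᶠ j in atTop, X ∉ lilBadEvent lam j := by
  have := hμ.1
  have hsum : Summable fun j : ℕ => ((j : ℝ) * log lam) ^ (-lam) := by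
    simp_rw [mul_rpow (Nat.cast_nonneg _) (log_nonneg hlam.le)]
    exact (summable_nat_rpow.2 (by linarith)).mul_right _
  refine ae_eventually_notMem_of_summable hsum ?_
  have hj : Tendsto (fun j : ℕ => (j : ℝ) * log lam) atTop atTop :=
    tendsto_natCast_atTop_atTop.atTop_mul_const (log_pos hlam)
  filter_upwards [hj.eventually_ge_atTop 1] with j hj using hμ.measureReal_lilBadEvent_le hlam hj

theorem eventually_coinSum_le_of_eventually_notMem_lilBadEvent {lam : ℝ} (hlam : 1 < lam)
    {X : ℕ → Bool} (hX : ∀ᶠ j in atTop, X ∉ lilBadEvent lam j) :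
    ∀ᶠ n : ℕ in atTop, coinSum X n ≤ n / 2 + lilBound lam n := by
  obtain ⟨J, hJ⟩ := eventually_atTop.1
    (hX.and ((tendsto_pow_atTop_atTop_of_one_lt hlam).eventually_ge_atTop (exp 1)))
  filter_upwards [eventually_ge_atTop ⌈lam ^ J⌉₊] with n hn
  have hJn : lam ^ J ≤ n := Nat.ceil_le.1 hn
  obtain ⟨j, hjn, hnj⟩ := exists_nat_pow_near ((one_le_pow₀ hlam.le).trans hJn) hlam
  have hJj : J ≤ j := Nat.lt_succ_iff.1 ((pow_lt_pow_iff_right₀ hlam).1 (hJn.trans_lt hnj))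
  obtain ⟨hnotMem, he⟩ := hJ j hJj
  have hbound : coinSum X n - n / 2 < lilBound lam (lam ^ j) :=
    not_le.1 fun h => hnotMem ⟨n, hnj.le, h⟩
  linarith [lilBound_le_lilBound (zero_le_one.trans hlam.le) he hjn]

/-- Upper half of the Law of the Iterated Logarithm: for `μ`-almost every `X`,
for every `λ > 1` there is `N` such that for all `n > N`,
`S_n(X) ≤ n/2 + λ √((n/2) log log n)`. -/
theorem lil_upper (μ : Measure (ℕ → Bool)) (hμ : IsFairCoin μ) :
    ∀ᵐ X ∂μ, ∀ lam : ℝ, 1 < lam → ∃ N : ℕ, ∀ n : ℕ, N < n →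
      coinSum X n ≤ n / 2 + lam * Real.sqrt ((n / 2) * Real.log (Real.log n)) := by
  have hm_one_lt : ∀ m : ℕ, 1 < 1 + 1 / ((m : ℝ) + 1) := fun m => by simp; positivity
  have hae : ∀ᵐ X ∂μ, ∀ m : ℕ, ∀ᶠ n : ℕ in atTop,
      coinSum X n ≤ n / 2 + lilBound (1 + 1 / ((m : ℝ) + 1)) n :=
    ae_all_iff.2 fun m => (hμ.ae_eventually_notMem_lilBadEvent (hm_one_lt m)).mono fun X hX =>
      eventually_coinSum_le_of_eventually_notMem_lilBadEvent (hm_one_lt m) hX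
  filter_upwards [hae] with X hX lam hlam
  obtain ⟨m, hm⟩ := exists_nat_one_div_lt (sub_pos.2 hlam)
  obtain ⟨N, hN⟩ := eventually_atTop.1 (hX m)
  refine ⟨N, fun n hn => (hN n hn.le).trans ?_⟩
  gcongr
  exact mul_le_mul_of_nonneg_right (by linarith) (sqrt_nonneg _)
end

section
/- For all natural numbers m ≥ 1 and N ≥ 1, the set V_{m,N} = {ω ∈ 2^ℕ : ∃ n > N, |S_n(ω)/n − 1/2| > 1/m} satisfies μ(V_{m,N}) ≤ 2·exp(−2N/m²)/(1 − exp(−2/m²)). -/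
open MeasureTheory Filter

/-!
Cylinder probabilities of a fair-coin measure factor, so the coordinates are independent and
`S_n - n/2` is a sum of `n` independent centred variables with values in `[-1/2, 1/2]`.
Hoeffding's inequality then gives `μ(|S_n/n - 1/2| > δ) ≤ 2 exp(-2nδ²)`, and a union bound over
`n > N` sums a geometric series of ratio `exp(-2δ²)`.
-/

open ProbabilityTheory
open scoped NNReal

lemma measure_exists_gt_le_of_le_geometric {Ω : Type*} [MeasurableSpace Ω] (μ : Measure Ω)
    {A : ℕ → Set Ω} {C r : ℝ} (hC : 0 ≤ C) (hr₀ : 0 ≤ r) (hr₁ : r < 1) (N : ℕ)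
    (hA : ∀ n, N < n → μ (A n) ≤ ENNReal.ofReal (C * r ^ n)) :
    μ {ω | ∃ n, N < n ∧ ω ∈ A n} ≤ ENNReal.ofReal (C * r ^ N / (1 - r)) := by
  have hgeom : Summable fun k ↦ C * r ^ (N + 1) * r ^ k :=
    (summable_geometric_of_lt_one hr₀ hr₁).mul_left _
  calc μ {ω | ∃ n, N < n ∧ ω ∈ A n} ≤ μ (⋃ k, A (N + 1 + k)) := by
        refine measure_mono fun ω ⟨n, hn, hω⟩ ↦ Set.mem_iUnion.2 ⟨n - (N + 1), ?_⟩
        rwa [Nat.add_sub_cancel' hn]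
    _ ≤ ∑' k, μ (A (N + 1 + k)) := measure_iUnion_le _
    _ ≤ ∑' k, ENNReal.ofReal (C * r ^ (N + 1) * r ^ k) :=
        ENNReal.tsum_le_tsum fun k ↦ (hA _ (by omega)).trans_eq (by rw [pow_add, mul_assoc])
    _ = ENNReal.ofReal (∑' k, C * r ^ (N + 1) * r ^ k) :=
        (ENNReal.ofReal_tsum_of_nonneg (fun k ↦ by positivity) hgeom).symm
    _ ≤ ENNReal.ofReal (C * r ^ N / (1 - r)) := by
        rw [tsum_mul_left, tsum_geometric_of_lt_one hr₀ hr₁, ← div_eq_mul_inv]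
        have : 0 < 1 - r := by linarith
        gcongr ENNReal.ofReal (C * ?_ / _)
        exact pow_le_pow_of_le_one hr₀ hr₁.le N.le_succ

lemma ProbabilityTheory.HasSubgaussianMGF.measure_abs_sum_range_ge_le_of_iIndepFun
    {Ω : Type*} [MeasurableSpace Ω] {μ : Measure Ω} {X : ℕ → Ω → ℝ} (h_indep : iIndepFun X μ)
    {c : ℝ≥0} {n : ℕ} (h_subG : ∀ i < n, HasSubgaussianMGF (X i) c μ) {ε : ℝ} (hε : 0 ≤ ε) :
    μ.real {ω | ε ≤ |∑ i ∈ Finset.range n, X i ω|} ≤ 2 * Real.exp (-ε ^ 2 / (2 * n * c)) := by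
  have := h_indep.isProbabilityMeasure
  have h_indep_neg : iIndepFun (fun i ↦ -X i) μ :=
    h_indep.comp (fun _ x ↦ -x) fun _ ↦ measurable_neg
  have upper := measure_sum_range_ge_le_of_iIndepFun h_indep h_subG hε
  have lower :=
    measure_sum_range_ge_le_of_iIndepFun h_indep_neg (fun i hi ↦ (h_subG i hi).neg) hε
  simp only [Pi.neg_apply, Finset.sum_neg_distrib] at lower
  calc μ.real {ω | ε ≤ |∑ i ∈ Finset.range n, X i ω|}
      ≤ μ.real ({ω | ε ≤ ∑ i ∈ Finset.range n, X i ω} ∪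
          {ω | ε ≤ -∑ i ∈ Finset.range n, X i ω}) :=
        measureReal_mono fun ω (hω : ε ≤ |_|) ↦ le_abs.1 hω
    _ ≤ _ := (measureReal_union_le _ _).trans (by linarith)

namespace IsFairCoin

variable {μ : Measure (ℕ → Bool)}

lemma measure_coord_eq (hμ : IsFairCoin μ) (i : ℕ) (b : Bool) : μ {ω | ω i = b} = 2⁻¹ := by
  simpa using hμ.2 {i} fun _ ↦ b

lemma iIndepFun_coord (hμ : IsFairCoin μ) : iIndepFun (fun i (ω : ℕ → Bool) ↦ ω i) μ := by
  have := hμ.1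
  refine iIndepFun_iff_finset.2 fun s ↦ ?_
  change iIndepFun (fun (i : s) (ω : ℕ → Bool) ↦ ω i) μ
  refine (iIndepFun_iff_map_fun_eq_pi_map fun i ↦ (measurable_pi_apply _).aemeasurable).2 ?_
  refine Measure.ext_of_singleton fun f ↦ ?_
  classical
  let g : ℕ → Bool := fun i ↦ if h : i ∈ s then f ⟨i, h⟩ else false
  have hcyl : (fun (ω : ℕ → Bool) (i : s) ↦ ω i) ⁻¹' {f} = {ω | ∀ i ∈ s, ω i = g i} := by
    ext ω
    simp +contextual [g, funext_iff]
  rw [Measure.pi_singleton, Measure.map_apply (by fun_prop) (measurableSet_singleton _), hcyl,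
    hμ.2]
  simp [Measure.map_apply (measurable_pi_apply _) (measurableSet_singleton _), Set.preimage,
    measure_coord_eq hμ]

lemma integral_coord_toNat (hμ : IsFairCoin μ) (i : ℕ) :
    ∫ ω, ((ω i).toNat : ℝ) ∂μ = 1 / 2 := by
  have hind : (fun ω : ℕ → Bool ↦ ((ω i).toNat : ℝ)) = {ω | ω i = true}.indicator 1 := by
    ext ω
    cases h : ω i <;> simp [h]
  rw [hind, integral_indicator_one (measurableSet_eq_fun (measurable_pi_apply i) measurable_const),
    measureReal_def, measure_coord_eq hμ]
  norm_num

lemma hasSubgaussianMGF_coord_sub_half (hμ : IsFairCoin μ) (i : ℕ) :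
    HasSubgaussianMGF (fun ω ↦ ((ω i).toNat : ℝ) - 1 / 2) (1 / 4) μ := by
  have := hμ.1
  have h := hasSubgaussianMGF_of_mem_Icc (μ := μ) (X := fun ω ↦ ((ω i).toNat : ℝ)) (a := 0)
    (b := 1)
    ((measurable_of_finite fun b : Bool ↦ (b.toNat : ℝ)).comp (measurable_pi_apply i)).aemeasurable
    (ae_of_all _ fun ω ↦ by cases ω i <;> simp)
  rw [integral_coord_toNat hμ] at h
  convert h using 1
  norm_num

lemma measureReal_abs_coinSum_sub_half_ge_le (hμ : IsFairCoin μ) (n : ℕ) {ε : ℝ} (hε : 0 ≤ ε) :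
    μ.real {ω | ε ≤ |coinSum ω n - n / 2|} ≤ 2 * Real.exp (-2 * ε ^ 2 / n) := by
  have h_indep : iIndepFun (fun i (ω : ℕ → Bool) ↦ ((ω i).toNat : ℝ) - 1 / 2) μ :=
    (iIndepFun_coord hμ).comp (fun _ b ↦ (b.toNat : ℝ) - 1 / 2) fun _ ↦ measurable_of_finite _
  have h := HasSubgaussianMGF.measure_abs_sum_range_ge_le_of_iIndepFun h_indep (n := n)
    (fun i _ ↦ hasSubgaussianMGF_coord_sub_half hμ i) hε
  have hsum (ω : ℕ → Bool) :
      coinSum ω n - n / 2 = ∑ i ∈ Finset.range n, (((ω i).toNat : ℝ) - 1 / 2) := by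
    simp [coinSum, Finset.sum_sub_distrib]
    ring
  simp_rw [hsum]
  convert h using 3
  push_cast
  ring

lemma measure_abs_coinSum_div_sub_half_gt_le (hμ : IsFairCoin μ) {n : ℕ} (hn : 0 < n) {δ : ℝ}
    (hδ : 0 ≤ δ) :
    μ {ω | δ < |coinSum ω n / n - 1 / 2|} ≤ ENNReal.ofReal (2 * Real.exp (-2 * n * δ ^ 2)) := by
  have := hμ.1
  have hn' : (0 : ℝ) < n := by exact_mod_cast hn
  have hsub : {ω | δ < |coinSum ω n / n - 1 / 2|} ⊆ {ω | n * δ ≤ |coinSum ω n - n / 2|} := by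
    intro ω (hω : δ < _)
    have : coinSum ω n - n / 2 = n * (coinSum ω n / n - 1 / 2) := by field_simp
    show (n : ℝ) * δ ≤ _
    rw [this, abs_mul, Nat.abs_cast]
    exact mul_le_mul_of_nonneg_left hω.le hn'.le
  calc μ {ω | δ < |coinSum ω n / n - 1 / 2|}
      ≤ μ {ω | n * δ ≤ |coinSum ω n - n / 2|} := measure_mono hsub
    _ = ENNReal.ofReal (μ.real {ω | n * δ ≤ |coinSum ω n - n / 2|}) :=
        (ofReal_measureReal (measure_ne_top _ _)).symm
    _ ≤ ENNReal.ofReal (2 * Real.exp (-2 * n * δ ^ 2)) := by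
      refine ENNReal.ofReal_le_ofReal <|
        (measureReal_abs_coinSum_sub_half_ge_le hμ n (by positivity)).trans_eq ?_
      field_simp

end IsFairCoin

theorem measure_VmN_le_general (μ : Measure (ℕ → Bool)) (hμ : IsFairCoin μ)
    (m N : ℕ) (hm : 1 ≤ m) :
    μ {ω | ∃ n : ℕ, N < n ∧ 1 / (m : ℝ) < |coinSum ω n / n - 1 / 2|}
      ≤ ENNReal.ofReal
          (2 * Real.exp (-2 * N / m ^ 2) / (1 - Real.exp (-2 / m ^ 2))) := by
  have hm' : (0 : ℝ) < m := by exact_mod_cast hm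
  have hr₁ : Real.exp (-2 / m ^ 2) < 1 :=
    Real.exp_lt_one_iff.2 (div_neg_of_neg_of_pos (by norm_num) (by positivity))
  have hA (n : ℕ) (hn : N < n) : μ {ω | 1 / (m : ℝ) < |coinSum ω n / n - 1 / 2|}
      ≤ ENNReal.ofReal (2 * Real.exp (-2 / m ^ 2) ^ n) := by
    convert hμ.measure_abs_coinSum_div_sub_half_gt_le (by omega : 0 < n)
      (by positivity : 0 ≤ 1 / (m : ℝ)) using 4
    rw [← Real.exp_nat_mul]
    ring_nf
  refine (measure_exists_gt_le_of_le_geometric μ zero_le_two (Real.exp_pos _).le hr₁ N hA).trans_eq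
    ?_
  rw [← Real.exp_nat_mul]
  ring_nf

/-- For `m ≥ 1` and `N ≥ 1`, the set
`V_{m,N} = {ω | ∃ n > N, |S_n(ω)/n − 1/2| > 1/m}` has measure at most
`2 exp(−2N/m²) / (1 − exp(−2/m²))`. -/
theorem measure_VmN_le (μ : Measure (ℕ → Bool)) (hμ : IsFairCoin μ)
    (m N : ℕ) (hm : 1 ≤ m) (hN : 1 ≤ N) :
    μ {ω | ∃ n : ℕ, N < n ∧ 1 / (m : ℝ) < |coinSum ω n / n - 1 / 2|}
      ≤ ENNReal.ofReal
          (2 * Real.exp (-2 * N / m ^ 2) / (1 - Real.exp (-2 / m ^ 2))) :=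
  measure_VmN_le_general μ hμ m N hm
end

section
/- Summability of the upper-LIL exceptional events: let λ > 1 and 1 < γ < λ be reals, let n_r be the integer nearest to γ^r, and for r large enough that log log n_r > 0 define B_r = {X ∈ 2^ℕ : ∃ n with n_r ≤ n ≤ n_{r+1} such that S_n(X) − n/2 > λ·√((n_r/2)·log log n_r)}. Then Σ_r μ(B_r) < ∞. -/
set_option maxHeartbeats 1000000


open MeasureTheory Filter Finset
open scoped ENNReal

/-- `nearestNat γ r` is the integer nearest to `γ ^ r`, as a natural number. -/
noncomputable def nearestNat (γ : ℝ) (r : ℕ) : ℕ := (round (γ ^ r)).toNat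

/-- The upper-LIL exceptional event `B_r` for parameters `λ` and `γ`:
the set of `X` such that `S_n(X) − n/2 > λ √((n_r/2) log log n_r)` for some
`n_r ≤ n ≤ n_{r+1}`, where `n_r` is the integer nearest to `γ^r`. -/
def upperLILEvent (lam γ : ℝ) (r : ℕ) : Set (ℕ → Bool) :=
  {X | ∃ n : ℕ, nearestNat γ r ≤ n ∧ n ≤ nearestNat γ (r + 1) ∧
    lam * Real.sqrt ((nearestNat γ r / 2) * Real.log (Real.log (nearestNat γ r)))
      < coinSum X n - n / 2}


def extEval {N : ℕ} (b : Fin N → Bool) : ℕ → Bool :=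
  fun i => if h : i < N then b ⟨i, h⟩ else false

noncomputable def Zc {N : ℕ} (b : Fin N → Bool) (n : ℕ) : ℝ :=
  coinSum (extEval b) n - n / 2

def flipFrom {N : ℕ} (n : ℕ) (b : Fin N → Bool) : Fin N → Bool :=
  fun i => if n ≤ i.val then ! b i else b i

lemma flipFrom_flipFrom {N : ℕ} (n : ℕ) (b : Fin N → Bool) :
    flipFrom n (flipFrom n b) = b := by
  funext i
  simp only [flipFrom]
  by_cases h : n ≤ i.val <;> simp [h]

lemma Zc_congr_prefix {N : ℕ} {b c : Fin N → Bool} {n : ℕ}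
    (h : ∀ i : Fin N, i.val < n → b i = c i) {k : ℕ} (hk : k ≤ n) :
    Zc b k = Zc c k := by
  unfold Zc coinSum
  congr 1
  refine Finset.sum_congr rfl fun i hi => ?_
  have hik : i < k := Finset.mem_range.1 hi
  by_cases hiN : i < N
  · simp only [extEval, dif_pos hiN]
    rw [h ⟨i, hiN⟩ (lt_of_lt_of_le hik hk)]
  · simp [extEval, hiN]

lemma Zc_flipFrom_prefix {N : ℕ} (n : ℕ) (b : Fin N → Bool) {k : ℕ} (hk : k ≤ n) :
    Zc (flipFrom n b) k = Zc b k :=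
  Zc_congr_prefix (fun i hi => by simp [flipFrom, Nat.not_le.2 hi]) hk

lemma Zc_flipFrom_add {N : ℕ} {n : ℕ} (hn : n ≤ N) (b : Fin N → Bool) :
    Zc (flipFrom n b) N + Zc b N = 2 * Zc b n := by
  have hsum : ∀ c : Fin N → Bool,
      coinSum (extEval c) N = coinSum (extEval c) n
        + ∑ i ∈ Finset.Ico n N, ((extEval c i).toNat : ℝ) := by
    intro c
    unfold coinSum
    rw [← Finset.sum_range_add_sum_Ico _ hn]
  have hIco : ∑ i ∈ Finset.Ico n N, (((extEval (flipFrom n b) i).toNat : ℝ)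
      + ((extEval b i).toNat : ℝ)) = (N - n : ℕ) := by
    rw [Finset.sum_congr rfl (fun i hi => ?_), Finset.sum_const, Nat.card_Ico,
      nsmul_eq_mul, mul_one]
    have hi' := Finset.mem_Ico.1 hi
    have hiN : i < N := hi'.2
    have hni : n ≤ i := hi'.1
    simp only [extEval, dif_pos hiN, flipFrom, if_pos hni]
    cases b ⟨i, hiN⟩ <;> norm_num
  have hpre : coinSum (extEval (flipFrom n b)) n = coinSum (extEval b) n := by
    have := Zc_flipFrom_prefix n b (le_refl n)
    unfold Zc at this; linarith
  have h1 := hsum (flipFrom n b)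
  have h2 := hsum b
  rw [Finset.sum_add_distrib] at hIco
  have hNn : ((N - n : ℕ) : ℝ) = (N : ℝ) - n := by
    have := Nat.cast_sub hn (R := ℝ); exact this
  unfold Zc
  rw [h1, h2, hpre]
  rw [hNn] at hIco
  linarith

lemma fairCoin_cyl (μ : Measure (ℕ → Bool)) (hμ : IsFairCoin μ) (N : ℕ)
    (P : (Fin N → Bool) → Prop) [DecidablePred P] :
    μ {X | P (fun i => X i)} = ((Finset.univ.filter P).card : ℝ≥0∞) * (1/2)^N := by
  have hset : {X : ℕ → Bool | P (fun i => X i)}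
      = ⋃ b ∈ (Finset.univ.filter P : Finset (Fin N → Bool)),
          {X : ℕ → Bool | ∀ i ∈ Finset.range N, X i = extEval b i} := by
    ext X
    simp only [Set.mem_setOf_eq, Set.mem_iUnion, Finset.mem_filter, Finset.mem_univ, true_and,
      Finset.mem_range, exists_prop]
    constructor
    · intro h
      exact ⟨fun i => X i, h, fun i hi => by simp [extEval, hi]⟩
    · rintro ⟨b, hb, hXb⟩
      have hfun : (fun i : Fin N => X i) = b := funext fun i => by
        have := hXb i.val i.isLt
        simpa [extEval, i.isLt] using this
      rwa [hfun]
  have hmeas : ∀ b : Fin N → Bool,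
      MeasurableSet {X : ℕ → Bool | ∀ i ∈ Finset.range N, X i = extEval b i} := by
    intro b
    have : {X : ℕ → Bool | ∀ i ∈ Finset.range N, X i = extEval b i}
        = ⋂ i ∈ Finset.range N, (fun X : ℕ → Bool => X i) ⁻¹' {extEval b i} := by
      ext X; simp
    rw [this]
    exact MeasurableSet.biInter (Finset.range N).countable_toSet
      (fun i _ => (measurable_pi_apply i) (measurableSet_singleton _))
  have hdisj : (↑(Finset.univ.filter P : Finset (Fin N → Bool)) : Set (Fin N → Bool)).PairwiseDisjoint
      (fun b => {X : ℕ → Bool | ∀ i ∈ Finset.range N, X i = extEval b i}) := by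
    intro b _ c _ hbc
    refine Set.disjoint_left.2 fun X hXb hXc => hbc ?_
    funext i
    have h1 := hXb i.val (Finset.mem_range.2 i.isLt)
    have h2 := hXc i.val (Finset.mem_range.2 i.isLt)
    have : extEval b i.val = extEval c i.val := by rw [← h1, h2]
    simpa [extEval, i.isLt] using this
  rw [hset, measure_biUnion_finset hdisj (fun b _ => hmeas b)]
  have hone : ∀ b : Fin N → Bool,
      μ {X : ℕ → Bool | ∀ i ∈ Finset.range N, X i = extEval b i} = (1/2 : ℝ≥0∞)^N := by
    intro b
    have := hμ.2 (Finset.range N) (extEval b)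
    simpa using this
  calc ∑ b ∈ filter P univ, μ {X | ∀ i ∈ Finset.range N, X i = extEval b i}
      = ∑ _b ∈ filter P univ, (1/2:ℝ≥0∞)^N := Finset.sum_congr rfl (fun b _ => hone b)
    _ = _ := by simp [mul_comm]

open scoped Classical in
lemma reflect_count (N : ℕ) (a : ℝ) :
    (Finset.univ.filter (fun b : Fin N → Bool => ∃ n, n ≤ N ∧ a < Zc b n)).card
      ≤ 2 * (Finset.univ.filter (fun b : Fin N → Bool => a < Zc b N)).card := by
  classical
  set Pmax : (Fin N → Bool) → Prop := fun b => ∃ n, n ≤ N ∧ a < Zc b n with hPmax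
  set G : (Fin N → Bool) → Prop := fun b => a < Zc b N with hGdef
  set s : Finset (Fin N → Bool) := Finset.univ.filter Pmax with hs
  -- the flip map
  set F : (Fin N → Bool) → (Fin N → Bool) := fun b =>
    if hb : ∃ n, n ≤ N ∧ a < Zc b n then flipFrom (Nat.find hb) b else b with hF
  have keyF : ∀ b, Pmax b → ¬ G b → (Pmax (F b) ∧ G (F b) ∧ F (F b) = b) := by
    intro b hb hGb
    have hFb : F b = flipFrom (Nat.find hb) b := by simp only [hF]; rw [dif_pos hb]
    set n := Nat.find hb with hn
    have hspec := Nat.find_spec hb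
    have hnN : n ≤ N := hspec.1
    have hZn : a < Zc b n := hspec.2
    have hmin : ∀ k, k < n → ¬ (k ≤ N ∧ a < Zc b k) := fun k hk => Nat.find_min hb hk
    have hZfn : Zc (flipFrom n b) n = Zc b n := Zc_flipFrom_prefix n b (le_refl n)
    have hPmaxF : Pmax (F b) := by
      rw [hFb]; exact ⟨n, hnN, by rw [hZfn]; exact hZn⟩
    have hGF : G (F b) := by
      have hadd := Zc_flipFrom_add hnN b
      have hZbN : Zc b N ≤ a := not_lt.1 hGb
      rw [hGdef, hFb]
      show a < Zc (flipFrom n b) N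
      linarith
    have hfind' : ∀ (hb' : ∃ m, m ≤ N ∧ a < Zc (flipFrom n b) m), Nat.find hb' = n := by
      intro hb'
      refine le_antisymm (Nat.find_le ⟨hnN, by rw [hZfn]; exact hZn⟩) ?_
      by_contra hlt
      push_neg at hlt
      have hspec' := Nat.find_spec hb'
      have heq : Zc (flipFrom n b) (Nat.find hb') = Zc b (Nat.find hb') :=
        Zc_flipFrom_prefix n b (le_of_lt hlt)
      exact hmin _ hlt ⟨hspec'.1, heq ▸ hspec'.2⟩
    have hFF : F (F b) = b := by
      rw [hFb, hF]
      simp only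
      have hb' : ∃ m, m ≤ N ∧ a < Zc (flipFrom n b) m := ⟨n, hnN, by rw [hZfn]; exact hZn⟩
      rw [dif_pos hb', hfind' hb']
      exact flipFrom_flipFrom n b
    exact ⟨hPmaxF, hGF, hFF⟩
  have hinj : ∀ b ∈ s.filter (fun b => ¬ G b), ∀ c ∈ s.filter (fun b => ¬ G b),
      F b = F c → b = c := by
    intro b hb c hc hbc
    simp only [hs, Finset.mem_filter, Finset.mem_univ, true_and] at hb hc
    have h1 := (keyF b hb.1 hb.2).2.2
    have h2 := (keyF c hc.1 hc.2).2.2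
    rw [← h1, hbc, h2]
  have hmaps : ∀ b ∈ s.filter (fun b => ¬ G b), F b ∈ s.filter G := by
    intro b hb
    simp only [hs, Finset.mem_filter, Finset.mem_univ, true_and] at hb ⊢
    exact ⟨(keyF b hb.1 hb.2).1, (keyF b hb.1 hb.2).2.1⟩
  have hcard1 : (s.filter (fun b => ¬ G b)).card ≤ (s.filter G).card :=
    Finset.card_le_card_of_injOn F hmaps hinj
  have hsplit : (s.filter G).card + (s.filter (fun b => ¬ G b)).card = s.card :=
    Finset.card_filter_add_card_filter_not (p := G)
  have hsub : s.filter G ⊆ Finset.univ.filter G := by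
    intro b hb
    simp only [Finset.mem_filter] at hb ⊢
    exact ⟨Finset.mem_univ b, hb.2⟩
  have hc2 := Finset.card_le_card hsub
  have hPeq : Finset.univ.filter (fun b : Fin N → Bool => ∃ n, n ≤ N ∧ a < Zc b n) = s :=
    Finset.filter_congr (fun x _ => Iff.rfl)
  have hGeq : Finset.univ.filter (fun b : Fin N → Bool => a < Zc b N)
      = Finset.univ.filter G := Finset.filter_congr (fun x _ => Iff.rfl)
  rw [hGeq]
  omega

open scoped Classical in
lemma chernoff_count (N : ℕ) (a t : ℝ) (ht : 0 ≤ t) :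
    ((Finset.univ.filter (fun b : Fin N → Bool => a < Zc b N)).card : ℝ)
      ≤ Real.exp (-(t*a)) * (Real.exp (t/2) + Real.exp (-(t/2)))^N := by
  have hZ : ∀ b : Fin N → Bool, Zc b N = ∑ i : Fin N, (((b i).toNat : ℝ) - 1/2) := by
    intro b
    have h1 : coinSum (extEval b) N = ∑ i : Fin N, ((b i).toNat : ℝ) := by
      unfold coinSum
      rw [← Fin.sum_univ_eq_sum_range (fun i => ((extEval b i).toNat : ℝ))]
      exact Finset.sum_congr rfl fun i _ => by simp [extEval, i.isLt]
    have h2 : (N : ℝ) / 2 = ∑ _i : Fin N, (1/2 : ℝ) := by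
      simp [Finset.sum_const]
      ring
    unfold Zc
    rw [h1, h2, ← Finset.sum_sub_distrib]
  have hexp : ∀ b : Fin N → Bool,
      Real.exp (t * Zc b N) = ∏ i : Fin N, Real.exp (t * (((b i).toNat : ℝ) - 1/2)) := by
    intro b
    rw [hZ, Finset.mul_sum, Real.exp_sum]
  have hsum : ∑ b : Fin N → Bool, Real.exp (t * Zc b N)
      = (Real.exp (t/2) + Real.exp (-(t/2)))^N := by
    have := Finset.prod_univ_sum (fun _ : Fin N => (Finset.univ : Finset Bool))
      (fun _ x => Real.exp (t * ((x.toNat : ℝ) - 1/2)))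
    rw [Fintype.piFinset_univ] at this
    have hL : ∏ i : Fin N, ∑ x : Bool, Real.exp (t * ((x.toNat : ℝ) - 1/2))
        = (Real.exp (t/2) + Real.exp (-(t/2)))^N := by
      have hb : ∑ x : Bool, Real.exp (t * ((x.toNat : ℝ) - 1/2))
          = Real.exp (t/2) + Real.exp (-(t/2)) := by
        have e1 : t * (((true : Bool).toNat : ℝ) - 1/2) = t/2 := by norm_num; ring
        have e2 : t * (((false : Bool).toNat : ℝ) - 1/2) = -(t/2) := by
          simp [Bool.toNat]; ring
        rw [Fintype.sum_bool, e1, e2]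
      rw [Finset.prod_congr rfl (fun i _ => hb), Finset.prod_const]
      simp
    rw [← hL, this]
    exact Finset.sum_congr rfl fun b _ => hexp b
  have hchain : ((Finset.univ.filter (fun b : Fin N → Bool => a < Zc b N)).card : ℝ)
      * Real.exp (t * a) ≤ (Real.exp (t/2) + Real.exp (-(t/2)))^N := by
    calc ((Finset.univ.filter (fun b : Fin N → Bool => a < Zc b N)).card : ℝ) * Real.exp (t * a)
        = ∑ _b ∈ Finset.univ.filter (fun b : Fin N → Bool => a < Zc b N), Real.exp (t * a) := by
          rw [Finset.sum_const, nsmul_eq_mul]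
      _ ≤ ∑ b ∈ Finset.univ.filter (fun b : Fin N → Bool => a < Zc b N), Real.exp (t * Zc b N) := by
          refine Finset.sum_le_sum fun b hb => ?_
          have := (Finset.mem_filter.1 hb).2
          exact Real.exp_le_exp.2 (mul_le_mul_of_nonneg_left this.le ht)
      _ ≤ ∑ b : Fin N → Bool, Real.exp (t * Zc b N) := by
          refine Finset.sum_le_sum_of_subset_of_nonneg (Finset.filter_subset _ _)
            fun b _ _ => (Real.exp_pos _).le
      _ = _ := hsum
  have hpos := Real.exp_pos (t * a)
  rw [Real.exp_neg, inv_mul_eq_div, le_div_iff₀ hpos]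
  exact hchain

open scoped Classical in
lemma measure_max_bound (μ : Measure (ℕ → Bool)) (hμ : IsFairCoin μ) (N : ℕ) (hN : 1 ≤ N)
    (a : ℝ) (ha : 0 ≤ a) :
    μ {X : ℕ → Bool | ∃ n, n ≤ N ∧ a < coinSum X n - n / 2}
      ≤ ENNReal.ofReal (2 * Real.exp (-(2*a^2/N))) := by
  have hNR : (0:ℝ) < N := by exact_mod_cast hN
  -- rewrite the event through the restriction
  have hres : ∀ (X : ℕ → Bool) (n : ℕ), n ≤ N →
      coinSum (extEval (fun i : Fin N => X i)) n = coinSum X n := by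
    intro X n hn
    unfold coinSum
    refine Finset.sum_congr rfl fun i hi => ?_
    have hiN : i < N := lt_of_lt_of_le (Finset.mem_range.1 hi) hn
    simp [extEval, hiN]
  have hev : {X : ℕ → Bool | ∃ n, n ≤ N ∧ a < coinSum X n - n / 2}
      = {X : ℕ → Bool | (fun b : Fin N → Bool => ∃ n, n ≤ N ∧ a < Zc b n) (fun i => X i)} := by
    ext X
    simp only [Set.mem_setOf_eq]
    constructor
    · rintro ⟨n, hn, hlt⟩
      exact ⟨n, hn, by unfold Zc; rw [hres X n hn]; exact hlt⟩
    · rintro ⟨n, hn, hlt⟩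
      refine ⟨n, hn, ?_⟩
      unfold Zc at hlt; rw [hres X n hn] at hlt; exact hlt
  have hμE := fairCoin_cyl μ hμ N (fun b : Fin N → Bool => ∃ n, n ≤ N ∧ a < Zc b n)
  rw [hev, hμE]
  -- counting bounds
  set cP := (Finset.univ.filter (fun b : Fin N → Bool => ∃ n, n ≤ N ∧ a < Zc b n)).card with hcP
  set cG := (Finset.univ.filter (fun b : Fin N → Bool => a < Zc b N)).card with hcG
  have hRC : cP ≤ 2 * cG := reflect_count N a
  set t : ℝ := 4*a/N with hts
  have htn : (0:ℝ) ≤ t := by positivity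
  have hCC := chernoff_count N a t htn
  -- real inequality
  have hmain : (cP : ℝ) * (1/2)^N ≤ 2 * Real.exp (-(2*a^2/N)) := by
    have hcosh : Real.exp (t/2) + Real.exp (-(t/2)) = 2 * Real.cosh (t/2) := by
      rw [Real.cosh_eq]; ring
    have hch : Real.cosh (t/2) ≤ Real.exp (t^2/8) := by
      calc Real.cosh (t/2) ≤ Real.exp ((t/2)^2/2) := Real.cosh_le_exp_half_sq (t/2)
        _ = Real.exp (t^2/8) := by ring_nf
    have hhalf : (0:ℝ) ≤ (1/2)^N := by positivity
    have h1 : (cP : ℝ) * (1/2)^N ≤ 2 * (cG : ℝ) * (1/2)^N := by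
      have : (cP : ℝ) ≤ 2 * (cG : ℝ) := by exact_mod_cast hRC
      exact mul_le_mul_of_nonneg_right this hhalf
    have h2 : 2 * (cG : ℝ) * (1/2)^N
        ≤ 2 * (Real.exp (-(t*a)) * (2 * Real.cosh (t/2))^N) * (1/2)^N := by
      have := mul_le_mul_of_nonneg_right (mul_le_mul_of_nonneg_left
        (hcosh ▸ hCC) (by norm_num : (0:ℝ) ≤ 2)) hhalf
      linarith
    have h3 : 2 * (Real.exp (-(t*a)) * (2 * Real.cosh (t/2))^N) * (1/2)^N
        = 2 * Real.exp (-(t*a)) * Real.cosh (t/2)^N := by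
      rw [mul_pow]
      ring_nf
      rw [mul_comm]
      ring_nf
      rw [mul_assoc, mul_assoc]
      congr 1
      rw [← mul_assoc, ← mul_pow]
      norm_num
    have h4 : 2 * Real.exp (-(t*a)) * Real.cosh (t/2)^N
        ≤ 2 * Real.exp (-(t*a)) * Real.exp (t^2/8)^N := by
      have hc0 : (0:ℝ) ≤ Real.cosh (t/2) := (Real.cosh_pos (t/2)).le
      have := pow_le_pow_left₀ hc0 hch N
      have h20 : (0:ℝ) ≤ 2 * Real.exp (-(t*a)) := by positivity
      exact mul_le_mul_of_nonneg_left this h20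
    have h5 : 2 * Real.exp (-(t*a)) * Real.exp (t^2/8)^N = 2 * Real.exp (-(2*a^2/N)) := by
      rw [← Real.exp_nat_mul, mul_assoc, ← Real.exp_add]
      congr 1
      rw [hts]
      field_simp
      ring
    linarith
  -- transfer to ℝ≥0∞
  have hconv : (cP : ℝ≥0∞) * (1/2)^N = ENNReal.ofReal ((cP : ℝ) * (1/2)^N) := by
    rw [ENNReal.ofReal_mul (by positivity), ENNReal.ofReal_pow (by norm_num : (0:ℝ) ≤ 1/2),
      ENNReal.ofReal_natCast]
    congr 2
    rw [ENNReal.ofReal_div_of_pos (by norm_num)]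
    simp [ENNReal.ofReal_one, ENNReal.ofReal_ofNat]
  rw [hconv]
  exact ENNReal.ofReal_le_ofReal hmain

lemma nearestNat_bounds {γ : ℝ} (hγ : 1 ≤ γ) (r : ℕ) :
    γ^r - 1/2 ≤ (nearestNat γ r : ℝ) ∧ (nearestNat γ r : ℝ) ≤ γ^r + 1/2 := by
  have hx : (1:ℝ) ≤ γ^r := by
    calc (1:ℝ) = 1^r := (one_pow r).symm
    _ ≤ γ^r := pow_le_pow_left₀ (by norm_num) hγ r
  have habs := abs_sub_round (γ^r)
  rw [abs_le] at habs
  have hlb : γ^r - 1/2 ≤ ((round (γ^r) : ℤ) : ℝ) := by linarith [habs.2]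
  have hub : ((round (γ^r) : ℤ) : ℝ) ≤ γ^r + 1/2 := by linarith [habs.1]
  have hpos : (0:ℤ) ≤ round (γ^r) := by
    have : (0:ℝ) ≤ ((round (γ^r) : ℤ) : ℝ) := by linarith
    exact_mod_cast this
  have hcast : ((nearestNat γ r : ℕ) : ℝ) = ((round (γ^r) : ℤ) : ℝ) := by
    unfold nearestNat
    exact_mod_cast congrArg (fun z : ℤ => (z : ℝ)) (Int.toNat_of_nonneg hpos)
  rw [hcast]
  exact ⟨hlb, hub⟩

/-- Summability of the upper-LIL exceptional events: for `1 < γ < λ`,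
`Σ_r μ(B_r) < ∞`. -/
theorem upperLILEvent_summable (μ : Measure (ℕ → Bool)) (hμ : IsFairCoin μ)
    (lam γ : ℝ) (hγ : 1 < γ) (hγlam : γ < lam) :
    ∑' r : ℕ, μ (upperLILEvent lam γ r) < ⊤ := by
  have hprob : IsProbabilityMeasure μ := hμ.1
  have hγ0 : (0:ℝ) < γ := lt_trans one_pos hγ
  have hlam1 : 1 < lam := lt_trans hγ hγlam
  have hlam0 : (0:ℝ) < lam := lt_trans one_pos hlam1
  set β : ℝ := (γ + lam^2)/2 with hβ
  have hlamsq : γ < lam^2 := by nlinarith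
  have hβγ : γ < β := by rw [hβ]; linarith
  have hβlam : β < lam^2 := by rw [hβ]; linarith
  have hβ0 : (0:ℝ) < β := by linarith
  set q : ℝ := lam^2/β with hq
  have hq1 : 1 < q := by
    rw [hq, lt_div_iff₀ hβ0]; linarith
  have hq0 : (0:ℝ) < q := lt_trans one_pos hq1
  set c : ℝ := Real.log γ / 2 with hc
  have hc0 : (0:ℝ) < c := by
    have := Real.log_pos hγ
    rw [hc]; linarith
  -- eventual facts
  have hpow : Tendsto (fun r : ℕ => γ^r) atTop atTop :=
    tendsto_pow_atTop_atTop_of_one_lt hγ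
  have ev1 : ∀ᶠ r : ℕ in atTop, Real.exp 1 + 1 ≤ γ^r := hpow.eventually_ge_atTop _
  have ev2 : ∀ᶠ r : ℕ in atTop, (1 + β)/(β - γ) ≤ γ^r := hpow.eventually_ge_atTop _
  have ev3 : ∀ᶠ r : ℕ in atTop, 2 * Real.log 2 / Real.log γ ≤ (r:ℕ) := by
    refine eventually_atTop.2 ⟨⌈2 * Real.log 2 / Real.log γ⌉₊, fun r hr => ?_⟩
    exact_mod_cast (Nat.ceil_le.1 hr)
  have ev4 : ∀ᶠ r : ℕ in atTop, 1 ≤ r := eventually_ge_atTop 1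
  obtain ⟨R, hR⟩ := eventually_atTop.1 ((ev1.and (ev2.and (ev3.and ev4))))
  set C : ℝ := 2 * (c^q)⁻¹ with hC
  have hC0 : 0 ≤ C := by
    rw [hC]
    have : (0:ℝ) < c^q := Real.rpow_pos_of_pos hc0 q
    positivity
  -- the per-r bound for large r
  have key : ∀ r : ℕ, R ≤ r → μ (upperLILEvent lam γ r) ≤ ENNReal.ofReal (C * ((r:ℝ)^q)⁻¹) := by
    intro r hr
    obtain ⟨h1, h2, h3, h4⟩ := hR r hr
    set n : ℕ := nearestNat γ r with hn
    set N : ℕ := nearestNat γ (r+1) with hN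
    obtain ⟨hnlb, hnub⟩ := nearestNat_bounds hγ.le r
    obtain ⟨hNlb, hNub⟩ := nearestNat_bounds hγ.le (r+1)
    have hexp1 : (0:ℝ) < Real.exp 1 := Real.exp_pos 1
    have hne : Real.exp 1 ≤ (n:ℝ) := by
      rw [hn]; nlinarith
    have hn1R : (1:ℝ) ≤ (n:ℝ) := by
      have : (1:ℝ) ≤ Real.exp 1 := by
        have := Real.add_one_le_exp (1:ℝ); linarith
      linarith
    have hN1 : 1 ≤ N := by
      have hx : (1:ℝ) ≤ γ^(r+1) := by
        calc (1:ℝ) = 1^(r+1) := (one_pow _).symm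
        _ ≤ γ^(r+1) := pow_le_pow_left₀ (by norm_num) hγ.le _
      have hNpos' : (0:ℝ) < (N:ℝ) := by rw [hN]; linarith
      have : 0 < N := by exact_mod_cast hNpos'
      omega
    rw [← hn] at hnlb hnub
    rw [← hN] at hNlb hNub
    have hNpos : (0:ℝ) < (N:ℝ) := by
      exact_mod_cast Nat.lt_of_lt_of_le Nat.zero_lt_one hN1
    have hexp1ge : (1:ℝ) ≤ Real.exp 1 := by
      have := Real.add_one_le_exp (1:ℝ); linarith
    have hlogn1 : 1 ≤ Real.log (n:ℝ) := by
      calc (1:ℝ) = Real.log (Real.exp 1) := (Real.log_exp 1).symm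
      _ ≤ Real.log (n:ℝ) := Real.log_le_log hexp1 hne
    have hlogn0 : 0 < Real.log (n:ℝ) := by linarith
    set L : ℝ := Real.log (Real.log (n:ℝ)) with hL
    have hL0 : 0 ≤ L := Real.log_nonneg hlogn1
    set a : ℝ := lam * Real.sqrt ((n:ℝ)/2 * L) with ha
    have ha0 : 0 ≤ a := mul_nonneg hlam0.le (Real.sqrt_nonneg _)
    have hsub : upperLILEvent lam γ r ⊆
        {X : ℕ → Bool | ∃ m, m ≤ N ∧ a < coinSum X m - m / 2} := by
      rintro X ⟨m, _, hm2, hm3⟩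
      exact ⟨m, hm2, hm3⟩
    have hb1 := (measure_mono hsub).trans (measure_max_bound μ hμ N hN1 a ha0)
    -- N ≤ β * n
    have hNβn : (N:ℝ) ≤ β * n := by
      have hβγ' : (0:ℝ) < β - γ := by linarith
      have h2' : (1 + β) ≤ γ^r * (β - γ) := by
        rw [div_le_iff₀ hβγ'] at h2; linarith
      have hpow1 : γ^(r+1) = γ^r * γ := pow_succ γ r
      have hmul : β * (γ^r - 1/2) ≤ β * n := mul_le_mul_of_nonneg_left hnlb hβ0.le
      have hmid : γ^(r+1) + 1/2 ≤ β * (γ^r - 1/2) := by rw [hpow1]; nlinarith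
      linarith
    -- exponent inequality
    have hn0 : (0:ℝ) ≤ (n:ℝ) := Nat.cast_nonneg n
    have ha2 : a^2 = lam^2 * ((n:ℝ)/2 * L) := by
      rw [ha, mul_pow, Real.sq_sqrt (by positivity)]
    have hqL : q * L ≤ 2*a^2/(N:ℝ) := by
      rw [le_div_iff₀ hNpos, ha2]
      have hqL0 : (0:ℝ) ≤ q * L := mul_nonneg hq0.le hL0
      have step : q * L * N ≤ q * L * (β * n) := mul_le_mul_of_nonneg_left hNβn hqL0
      have hqβ : q * β = lam^2 := by rw [hq]; field_simp
      have hrhs : q * L * (β * (n:ℝ)) = lam^2 * ((n:ℝ) * L) := by rw [← hqβ]; ring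
      calc q * L * (N:ℝ) ≤ q * L * (β * (n:ℝ)) := step
        _ = lam^2 * ((n:ℝ) * L) := hrhs
        _ = 2 * (lam^2 * ((n:ℝ)/2 * L)) := by ring
    have hexp_le : Real.exp (-(2*a^2/(N:ℝ))) ≤ Real.exp (-(q*L)) :=
      Real.exp_le_exp.2 (by linarith)
    -- log n ≥ c * r
    have hlogγ : 0 < Real.log γ := Real.log_pos hγ
    have hlogn_cr : c * r ≤ Real.log (n:ℝ) := by
      have hγr1 : (1:ℝ) ≤ γ^r := by linarith
      have hhalf : γ^r/2 ≤ (n:ℝ) := by linarith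
      have hpos2 : (0:ℝ) < γ^r/2 := by positivity
      have hll : Real.log (γ^r/2) ≤ Real.log (n:ℝ) := Real.log_le_log hpos2 hhalf
      rw [Real.log_div (by positivity) (by norm_num), Real.log_pow] at hll
      have h3' : 2 * Real.log 2 ≤ r * Real.log γ := by
        rw [div_le_iff₀ hlogγ] at h3; linarith
      rw [hc]; push_cast at hll ⊢; linarith
    have hr1 : (1:ℝ) ≤ (r:ℝ) := by exact_mod_cast h4
    have hcr0 : (0:ℝ) < c * r := mul_pos hc0 (by linarith)
    have hexpqL : Real.exp (-(q*L)) = ((Real.log (n:ℝ))^q)⁻¹ := by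
      rw [Real.exp_neg]
      congr 1
      rw [hL, mul_comm, Real.exp_mul, Real.exp_log hlogn0]
    have hrpow : (c*(r:ℝ))^q ≤ (Real.log (n:ℝ))^q :=
      Real.rpow_le_rpow hcr0.le hlogn_cr hq0.le
    have hcrpos : (0:ℝ) < (c*(r:ℝ))^q := Real.rpow_pos_of_pos hcr0 q
    have hinv : ((Real.log (n:ℝ))^q)⁻¹ ≤ ((c*(r:ℝ))^q)⁻¹ :=
      inv_anti₀ hcrpos hrpow
    have hcrq : (c*(r:ℝ))^q = c^q * (r:ℝ)^q := Real.mul_rpow hc0.le (Nat.cast_nonneg r)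
    have hfinal : 2 * Real.exp (-(2*a^2/(N:ℝ))) ≤ C * ((r:ℝ)^q)⁻¹ := by
      have e1 : Real.exp (-(2*a^2/(N:ℝ))) ≤ ((c*(r:ℝ))^q)⁻¹ := by
        rw [← hexpqL] at hinv
        exact hexp_le.trans hinv
      have e2 : ((c*(r:ℝ))^q)⁻¹ = (c^q)⁻¹ * ((r:ℝ)^q)⁻¹ := by
        rw [hcrq, mul_inv]
      rw [hC]
      calc 2 * Real.exp (-(2*a^2/(N:ℝ))) ≤ 2 * ((c*(r:ℝ))^q)⁻¹ := by linarith
        _ = 2 * (c^q)⁻¹ * ((r:ℝ)^q)⁻¹ := by rw [e2]; ring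
    exact hb1.trans ((ENNReal.ofReal_le_ofReal hfinal))
  -- summability
  haveI := hprob
  have hsummable : Summable (fun r : ℕ => C * ((r:ℝ)^q)⁻¹) :=
    (Real.summable_nat_rpow_inv.2 hq1).mul_left C
  have htop : ∑' r : ℕ, (ENNReal.ofReal (C * ((r:ℝ)^q)⁻¹)) < ⊤ := by
    rw [← ENNReal.ofReal_tsum_of_nonneg (fun r => by positivity) hsummable]
    exact ENNReal.ofReal_lt_top
  have hle : ∀ r : ℕ, μ (upperLILEvent lam γ r)
      ≤ (if r < R then 1 else 0) + ENNReal.ofReal (C * ((r:ℝ)^q)⁻¹) := by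
    intro r
    by_cases h : r < R
    · simp only [if_pos h]
      exact le_add_right prob_le_one
    · simp only [if_neg h, zero_add]
      exact key r (not_lt.1 h)
  calc ∑' r : ℕ, μ (upperLILEvent lam γ r)
      ≤ ∑' r : ℕ, ((if r < R then 1 else 0) + ENNReal.ofReal (C * ((r:ℝ)^q)⁻¹)) :=
        ENNReal.tsum_le_tsum hle
    _ = (∑' r : ℕ, (if r < R then (1:ℝ≥0∞) else 0))
        + ∑' r : ℕ, ENNReal.ofReal (C * ((r:ℝ)^q)⁻¹) := ENNReal.tsum_add
    _ < ⊤ := by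
        have h1 : (∑' r : ℕ, (if r < R then (1:ℝ≥0∞) else 0))
            = ∑ r ∈ Finset.range R, (if r < R then (1:ℝ≥0∞) else 0) :=
          tsum_eq_sum (fun b hb => if_neg (by simpa using hb))
        have h2 : (∑ r ∈ Finset.range R, (if r < R then (1:ℝ≥0∞) else 0)) < ⊤ := by
          refine ENNReal.sum_lt_top.2 fun a _ => ?_
          split <;> simp
        rw [h1]
        exact ENNReal.add_lt_top.2 ⟨h2, htop⟩
end

section
/- Divergence of the lower-LIL events: let 0 < η < 1 be real and let γ ≥ 2 be a natural number with (γ−1)/γ > η. Set n_r = γ^r, D_r(X) = S_{n_r}(X) − S_{n_{r−1}}(X), and for r large enough that log log n_r > 0 define A_r = {X ∈ 2^ℕ : D_r(X) − (n_r − n_{r−1})/2 > η·√((n_r/2)·log log n_r)}. Then the events (A_r) are mutually independent and Σ_r μ(A_r) = ∞. -/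
/-
The events `A_r` depend on the disjoint coordinate blocks `[γ^(r-1), γ^r)`, and the fair-coin
measure is the product measure, so they are independent. For the divergence, `D_r` is a sum of
`2M` fair bits with `M = (γ^r - γ^(r-1))/2`, and the threshold is `t = √(α M log log γ^r)`
with `α = η²γ/(γ-1) < 1`. Summing the binomial probabilities over a window of `√M` values
just above `M + t`, and using `C(2M, M+k) ≥ C(2M, M) e^{-k²/(M-k)}` and
`C(2M, M) ≥ 4^M/(2√M)`, gives `μ(A_r) ≥ e^{-k²/(M-k)}/2` with `k ≈ t + √M`. As
`t + √M = o(M)` and `log log γ^r = log r + O(1)`, this is at least `c r^{-β}` for some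
`β < 1`, and `∑ r^{-β} = ∞`.
-/

open MeasureTheory Filter

/-- The block increment `D_r(X) = S_{γ^r}(X) − S_{γ^{r−1}}(X)`. -/
noncomputable def blockIncr (γ : ℕ) (r : ℕ) (X : ℕ → Bool) : ℝ :=
  coinSum X (γ ^ r) - coinSum X (γ ^ (r - 1))

/-- The lower-LIL event `A_r` for parameters `η` and `γ`, with `n_r = γ^r`:
the set of `X` with `D_r(X) − (n_r − n_{r−1})/2 > η √((n_r/2) log log n_r)`. -/
def lowerLILEvent (η : ℝ) (γ : ℕ) (r : ℕ) : Set (ℕ → Bool) :=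
  {X | η * Real.sqrt ((γ ^ r / 2) * Real.log (Real.log (γ ^ r)))
        < blockIncr γ r X - ((γ ^ r : ℕ) - (γ ^ (r - 1) : ℕ) : ℝ) / 2}

open Finset Real Topology ProbabilityTheory
open scoped ENNReal

lemma ProbabilityTheory.iIndepFun.iIndepFun_restrict_of_pairwise_disjoint {Ω ι κ β : Type*}
    [MeasurableSpace Ω] [MeasurableSpace β] {P : Measure Ω} {f : ι → Ω → β}
    (hf : iIndepFun f P) (hf_meas : ∀ i, Measurable (f i)) {S : κ → Finset ι}
    (hS : Pairwise (Function.onFun Disjoint S)) :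
    iIndepFun (fun k ω (i : S k) ↦ f i ω) P := by
  -- Reindexed by `Σ k, S k` the coordinates stay independent, as the blocks are disjoint, and
  -- currying turns the product law over `Σ k, S k` into the product of the block laws.
  have := hf.isProbabilityMeasure
  have (i : ι) : IsProbabilityMeasure (P.map (f i)) :=
    Measure.isProbabilityMeasure_map (hf_meas i).aemeasurable
  have hinj : Function.Injective fun p : (k : κ) × S k ↦ (p.2 : ι) := by
    rintro ⟨k, i, hi⟩ ⟨k', i', hi'⟩ (rfl : i = i')
    obtain rfl : k = k' := by
      by_contra hk
      exact disjoint_left.1 (hS hk) hi hi'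
    rfl
  have hcurry : (fun ω (k : κ) (i : S k) ↦ f i ω) =
      MeasurableEquiv.piCurry (fun k (_ : S k) ↦ β) ∘
        fun ω (p : (k : κ) × S k) ↦ f p.2 ω := rfl
  rw [iIndepFun_iff_map_fun_eq_infinitePi_map (fun k ↦ by fun_prop), hcurry,
    ← Measure.map_map (by fun_prop) (by fun_prop),
    (iIndepFun_iff_map_fun_eq_infinitePi_map fun p ↦ hf_meas _).1 (hf.precomp hinj),
    Measure.infinitePi_map_piCurry (fun k (i : S k) ↦ P.map (f i))]
  congr with k : 1
  exact ((iIndepFun_iff_map_fun_eq_infinitePi_map fun i ↦ hf_meas _).1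
    (hf.precomp Subtype.val_injective)).symm

lemma ProbabilityTheory.iIndepFun.iIndepSet_preimage {Ω ι : Type*} {β : ι → Type*}
    [MeasurableSpace Ω] [∀ i, MeasurableSpace (β i)] {μ : Measure Ω} {f : ∀ i, Ω → β i}
    (hf : iIndepFun f μ) {B : ∀ i, Set (β i)} (hB : ∀ i, MeasurableSet (B i)) :
    iIndepSet (fun i ↦ f i ⁻¹' B i) μ :=
  iIndep_of_iIndep_of_le ((iIndepFun_iff_iIndep _ _ _).1 hf) fun i ↦
    MeasurableSpace.generateFrom_le fun t ht ↦ by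
      rw [Set.mem_singleton_iff.1 ht]
      exact ⟨B i, hB i, rfl⟩

lemma IsFairCoin.map_restrict {μ : Measure (ℕ → Bool)} (hμ : IsFairCoin μ) (s : Finset ℕ) :
    μ.map s.restrict = Measure.pi fun _ : s ↦ (PMF.uniformOfFintype Bool).toMeasure := by
  refine Measure.ext_of_singleton fun g ↦ ?_
  have hcyl : s.restrict ⁻¹' ({g} : Set (s → Bool)) =
      {X : ℕ → Bool | ∀ i ∈ s, X i = if h : i ∈ s then g ⟨i, h⟩ else false} := by
    ext X
    simp +contextual [funext_iff]
  rw [Measure.map_apply (Finset.measurable_restrict s) (measurableSet_singleton g), hcyl, hμ.2]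
  simp

lemma IsFairCoin.eq_infinitePi {μ : Measure (ℕ → Bool)} (hμ : IsFairCoin μ) :
    μ = Measure.infinitePi fun _ ↦ (PMF.uniformOfFintype Bool).toMeasure :=
  IsProjectiveLimit.unique hμ.map_restrict (Measure.isProjectiveLimit_infinitePi _)

lemma IsFairCoin.iIndepFun_eval {μ : Measure (ℕ → Bool)} (hμ : IsFairCoin μ) :
    iIndepFun (fun i X ↦ X i) μ := by
  rw [hμ.eq_infinitePi]
  exact iIndepFun_infinitePi (X := fun _ ↦ id) fun _ ↦ measurable_id

lemma sum_toNat_eq_card_filter {ι : Type*} (s : Finset ι) (X : ι → Bool) :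
    ∑ i ∈ s, (X i).toNat = #{i ∈ s | X i} := by
  rw [card_filter]
  exact sum_congr rfl fun i _ ↦ by cases X i <;> rfl

lemma eq_filter_of_forall_eq_decide {ι : Type*} [DecidableEq ι] {s u : Finset ι}
    {X : ι → Bool} (hus : u ⊆ s) (hX : ∀ i ∈ s, X i = decide (i ∈ u)) :
    u = {i ∈ s | X i} := by
  ext i
  rw [mem_filter]
  constructor
  · intro hi
    exact ⟨hus hi, by simp [hX i (hus hi), hi]⟩
  · rintro ⟨hi, hXi⟩
    simpa [hX i hi] using hXi

lemma setOf_sum_toNat_eq {ι : Type*} [DecidableEq ι] (s : Finset ι) (j : ℕ) :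
    {X : ι → Bool | ∑ i ∈ s, (X i).toNat = j} =
      ⋃ u ∈ s.powersetCard j, {X | ∀ i ∈ s, X i = decide (i ∈ u)} := by
  ext X
  simp only [Set.mem_ofPred_eq, Set.mem_iUnion, mem_powersetCard, sum_toNat_eq_card_filter,
    exists_prop]
  constructor
  · rintro rfl
    exact ⟨_, ⟨filter_subset _ _, rfl⟩, fun i hi ↦ by simp [hi]⟩
  · rintro ⟨u, ⟨hus, rfl⟩, hX⟩
    rw [eq_filter_of_forall_eq_decide hus hX]

lemma IsFairCoin.measure_sum_toNat_eq {μ : Measure (ℕ → Bool)} (hμ : IsFairCoin μ)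
    (s : Finset ℕ) (j : ℕ) :
    μ {X | ∑ i ∈ s, (X i).toNat = j} = (#s).choose j * (1 / 2) ^ #s := by
  rw [setOf_sum_toNat_eq, measure_biUnion_finset, sum_congr rfl fun u _ ↦ hμ.2 _ _, sum_const,
    card_powersetCard, nsmul_eq_mul]
  · intro u hu v hv huv
    exact Set.disjoint_left.2 fun X hXu hXv ↦ huv <|
      (eq_filter_of_forall_eq_decide (mem_powersetCard.1 hu).1 hXu).trans
        (eq_filter_of_forall_eq_decide (mem_powersetCard.1 hv).1 hXv).symm
  · exact fun u _ ↦ by measurability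

lemma Nat.sixteen_pow_le_four_mul_mul_centralBinom_sq {n : ℕ} (hn : 1 ≤ n) :
    16 ^ n ≤ 4 * n * n.centralBinom ^ 2 := by
  induction n, hn using Nat.le_induction with
  | base => decide
  | succ n hn ih =>
    have h : (n + 1) * 16 ^ (n + 1) ≤ (n + 1) * (4 * (n + 1) * (n + 1).centralBinom ^ 2) :=
      calc (n + 1) * 16 ^ (n + 1) = 16 * (n + 1) * 16 ^ n := by ring
        _ ≤ 16 * (n + 1) * (4 * n * n.centralBinom ^ 2) := by gcongr
        _ = 16 * (4 * n * (n + 1)) * n.centralBinom ^ 2 := by ring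
        _ ≤ 16 * (2 * n + 1) ^ 2 * n.centralBinom ^ 2 := by gcongr; nlinarith
        _ = 4 * ((n + 1) * (n + 1).centralBinom) ^ 2 := by
          rw [Nat.succ_mul_centralBinom_succ]; ring
        _ = (n + 1) * (4 * (n + 1) * (n + 1).centralBinom ^ 2) := by ring
    exact Nat.le_of_mul_le_mul_left h n.succ_pos

lemma Nat.four_pow_le_two_mul_mul_centralBinom {n m : ℕ} (hn : 1 ≤ n) (hnm : n ≤ m ^ 2) :
    4 ^ n ≤ 2 * m * n.centralBinom := by
  refine (Nat.pow_le_pow_iff_left two_ne_zero).1 ?_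
  calc (4 ^ n) ^ 2 = 16 ^ n := by rw [← pow_mul, mul_comm, pow_mul]; norm_num
    _ ≤ 4 * n * n.centralBinom ^ 2 := Nat.sixteen_pow_le_four_mul_mul_centralBinom_sq hn
    _ ≤ 4 * m ^ 2 * n.centralBinom ^ 2 := by gcongr
    _ = (2 * m * n.centralBinom) ^ 2 := by ring

lemma Nat.centralBinom_mul_exp_le_choose {n k : ℕ} (hk : k < n) :
    n.centralBinom * rexp (-(k ^ 2 / (n - k))) ≤ (2 * n).choose (n + k) := by
  induction k with
  | zero => simp [Nat.centralBinom_eq_two_mul_choose]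
  | succ k ih =>
    -- Passing from `k` to `k + 1` multiplies the binomial coefficient by `(n - k)/(n + k + 1)`,
    -- whose inverse `1 + (2k+1)/(n-k)` is at most `exp ((2k+1)/(n-k))`, and the exponent
    -- grows by at least `(2k+1)/(n-k)`.
    push_cast
    have hkn : (k : ℝ) + 1 < n := by exact_mod_cast hk
    have hpos : (0 : ℝ) < n - k := by linarith
    have hrec : ((2 * n).choose (n + (k + 1)) : ℝ) * (n + k + 1) =
        (2 * n).choose (n + k) * (n - k) := by
      have h := congrArg (Nat.cast : ℕ → ℝ) (Nat.choose_succ_right_eq (2 * n) (n + k))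
      rw [show 2 * n - (n + k) = n - k by omega] at h
      push_cast [Nat.cast_sub (by omega : k ≤ n)] at h
      rw [← add_assoc, h]
    set a := (k : ℝ) ^ 2 / (n - k)
    set a' := ((k : ℝ) + 1) ^ 2 / (n - (k + 1))
    have hstep : (2 * k + 1) / (n - k) ≤ a' - a := by
      have h1 : ((k : ℝ) + 1) ^ 2 / (n - k) ≤ a' :=
        div_le_div_of_nonneg_left (by positivity) (by linarith) (by linarith)
      have h2 : ((k : ℝ) + 1) ^ 2 / (n - k) - a = (2 * k + 1) / (n - k) := by
        rw [div_sub_div_same]; ring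
      linarith
    have hratio : (n + k + 1 : ℝ) ≤ (n - k) * rexp (a' - a) :=
      calc (n + k + 1 : ℝ) = (n - k) * ((2 * k + 1) / (n - k) + 1) := by field_simp; ring
        _ ≤ (n - k) * rexp ((2 * k + 1) / (n - k)) := by gcongr; exact add_one_le_exp _
        _ ≤ (n - k) * rexp (a' - a) := by gcongr
    have hexp : rexp (-a') * rexp (a' - a) = rexp (-a) := by rw [← exp_add]; ring_nf
    refine le_of_mul_le_mul_right ?_ (by linarith : (0 : ℝ) < n + k + 1)
    calc n.centralBinom * rexp (-a') * (n + k + 1)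
        ≤ n.centralBinom * rexp (-a') * ((n - k) * rexp (a' - a)) := by gcongr
      _ = n.centralBinom * rexp (-a) * (n - k) := by
        linear_combination (n.centralBinom * (n - k) : ℝ) * hexp
      _ ≤ (2 * n).choose (n + k) * (n - k) := by gcongr; exact ih (by omega)
      _ = _ := hrec.symm

lemma Nat.centralBinom_mul_exp_le_sum_choose {M k w : ℕ} (hkw : k + w < M) :
    (w + 1) * M.centralBinom * rexp (-((k + w) ^ 2 / (M - (k + w)))) ≤
      ∑ j ∈ range (w + 1), ((2 * M).choose (M + (k + j)) : ℝ) := by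
  rw [mul_assoc, show ((w : ℝ) + 1) = #(range (w + 1)) by simp, ← nsmul_eq_mul]
  refine card_nsmul_le_sum _ (fun j ↦ ((2 * M).choose (M + (k + j)) : ℝ)) _ fun j hj ↦ ?_
  have hjw : j ≤ w := Nat.lt_succ_iff.1 (mem_range.1 hj)
  have hjw' : (j : ℝ) ≤ w := by exact_mod_cast hjw
  have hkwM : (k : ℝ) + w < M := by exact_mod_cast hkw
  calc M.centralBinom * rexp (-((k + w) ^ 2 / (M - (k + w))))
      ≤ M.centralBinom * rexp (-(((k + j : ℕ) : ℝ) ^ 2 / (M - (k + j : ℕ)))) := by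
        push_cast
        gcongr
    _ ≤ _ := Nat.centralBinom_mul_exp_le_choose (by omega)

lemma IsFairCoin.exp_neg_div_le_measureReal {μ : Measure (ℕ → Bool)} (hμ : IsFairCoin μ)
    {s : Finset ℕ} {M k w : ℕ} (hs : #s = 2 * M) {t : ℝ} (ht : t < k)
    (hw : M ≤ (w + 1) ^ 2) (hkw : k + w < M) :
    rexp (-((k + w) ^ 2 / (M - (k + w)))) / 2 ≤
      μ.real {X | t < ((∑ i ∈ s, (X i).toNat : ℕ) : ℝ) - M} := by
  -- Each of the `w + 1 ≥ √M` values `M + k + j`, `j ≤ w`, of the sum has probability at least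
  -- `C(2M, M) e^{-(k+w)²/(M-(k+w))} / 4^M ≥ e^{-(k+w)²/(M-(k+w))} / (2 (w + 1))`.
  have := hμ.1
  set E : ℕ → Set (ℕ → Bool) := fun j ↦ {X | ∑ i ∈ s, (X i).toNat = M + (k + j)}
  have hsub :
      ⋃ j ∈ range (w + 1), E j ⊆ {X | t < ((∑ i ∈ s, (X i).toNat : ℕ) : ℝ) - M} := by
    simp only [Set.iUnion_subset_iff]
    intro j _ X hX
    simp only [E, Set.mem_ofPred_eq] at hX ⊢
    rw [hX]
    push_cast
    linarith [(Nat.cast_nonneg j : (0 : ℝ) ≤ j)]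
  have hunion : μ.real (⋃ j ∈ range (w + 1), E j) =
      ∑ j ∈ range (w + 1), ((2 * M).choose (M + (k + j)) : ℝ) / 4 ^ M := by
    rw [measureReal_biUnion_finset]
    · refine sum_congr rfl fun j _ ↦ ?_
      rw [measureReal_def, hμ.measure_sum_toNat_eq, hs]
      norm_num [ENNReal.toReal_mul, pow_mul, div_eq_mul_inv, ← inv_pow]
    · intro i _ j _ hij
      exact Set.disjoint_left.2 fun X hi hj ↦ hij <| by
        simp only [E, Set.mem_ofPred_eq] at hi hj
        omega
    · exact fun j _ ↦ by measurability
  have hcentral : (4 : ℝ) ^ M ≤ 2 * (w + 1) * M.centralBinom := by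
    exact_mod_cast Nat.four_pow_le_two_mul_mul_centralBinom (by omega) hw
  calc rexp (-((k + w) ^ 2 / (M - (k + w)))) / 2
      ≤ (w + 1) * M.centralBinom * rexp (-((k + w) ^ 2 / (M - (k + w)))) / 4 ^ M := by
        rw [div_le_div_iff₀ (by norm_num) (by positivity)]
        nlinarith [exp_pos (-((k + w) ^ 2 / (M - (k + w)) : ℝ))]
    _ ≤ ∑ j ∈ range (w + 1), ((2 * M).choose (M + (k + j)) : ℝ) / 4 ^ M := by
        rw [← sum_div]
        gcongr
        exact Nat.centralBinom_mul_exp_le_sum_choose hkw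
    _ = μ.real (⋃ j ∈ range (w + 1), E j) := hunion.symm
    _ ≤ _ := measureReal_mono hsub

lemma sq_div_sub_le {a b m ε : ℝ} (hε0 : 0 < ε) (hε1 : ε < 1) (hm : 0 < m)
    (hab : a + b ≤ ε * m) :
    (a + b) ^ 2 / (m - (a + b)) ≤
      ((1 + ε) * a ^ 2 + (1 + ε⁻¹) * b ^ 2) / ((1 - ε) * m) := by
  have hyoung : (a + b) ^ 2 ≤ (1 + ε) * a ^ 2 + (1 + ε⁻¹) * b ^ 2 := by
    have h : (ε * a - b) ^ 2 / ε = ε * a ^ 2 - 2 * a * b + ε⁻¹ * b ^ 2 := by field_simp; ring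
    nlinarith [div_nonneg (sq_nonneg (ε * a - b)) hε0.le]
  exact div_le_div₀ (by positivity) hyoung (by nlinarith) (by linarith)

lemma ENNReal.tsum_eq_top_of_eventually_rpow_le {f : ℕ → ℝ≥0∞} {β c : ℝ}
    (hβ : β ≤ 1) (hc : 0 < c)
    (hf : ∀ᶠ n : ℕ in atTop, c * (n : ℝ) ^ (-β) ≤ (f n).toReal) :
    ∑' n, f n = ⊤ := by
  by_contra h
  have hsum : Summable fun n : ℕ ↦ c * (n : ℝ) ^ (-β) :=
    (ENNReal.summable_toReal h).of_norm_bounded_eventually_nat <| hf.mono fun n hn ↦ by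
      rwa [Real.norm_of_nonneg (by positivity)]
  have := Real.summable_nat_rpow.1 ((summable_mul_left_iff hc.ne').1 hsum)
  linarith

def lilBlock (γ r : ℕ) : Finset ℕ := Ico (γ ^ (r - 1)) (γ ^ r)

-- The division is exact only for `r ≥ 2`, where the block length `γ^(r-1) (γ - 1)` is even.
def lilHalfBlock (γ r : ℕ) : ℕ := (γ ^ r - γ ^ (r - 1)) / 2

noncomputable def lilThreshold (η : ℝ) (γ r : ℕ) : ℝ :=
  η * √((γ ^ r / 2) * log (log (γ ^ r)))

noncomputable def lilWindowBound (η : ℝ) (γ r : ℕ) : ℝ :=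
  lilThreshold η γ r + √(lilHalfBlock γ r) + 1

section

variable {γ : ℕ}

lemma pairwise_disjoint_lilBlock (hγ : 1 ≤ γ) :
    Pairwise (Function.onFun Disjoint (lilBlock γ)) := by
  intro r r' h
  wlog hlt : r < r' generalizing r r'
  · exact (this h.symm (by omega)).symm
  have : γ ^ r ≤ γ ^ (r' - 1) := Nat.pow_le_pow_right hγ (by omega)
  exact disjoint_left.2 fun i hi hi' ↦ by simp only [lilBlock, mem_Ico] at hi hi'; omega

lemma blockIncr_eq_sum (hγ : 1 ≤ γ) (r : ℕ) (X : ℕ → Bool) :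
    blockIncr γ r X = ∑ i ∈ lilBlock γ r, ((X i).toNat : ℝ) :=
  (sum_Ico_eq_sub _ (Nat.pow_le_pow_right hγ (r.sub_le 1))).symm

lemma lowerLILEvent_eq_preimage_restrict (hγ : 1 ≤ γ) (η : ℝ) (r : ℕ) :
    lowerLILEvent η γ r = (lilBlock γ r).restrict ⁻¹'
      {g | lilThreshold η γ r <
        ∑ i, ((g i).toNat : ℝ) - ((γ ^ r : ℕ) - (γ ^ (r - 1) : ℕ) : ℝ) / 2} := by
  ext X
  simp only [lowerLILEvent, lilThreshold, Set.mem_preimage, Set.mem_ofPred_eq, Finset.restrict,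
    blockIncr_eq_sum hγ, sum_coe_sort (lilBlock γ r) fun i ↦ ((X i).toNat : ℝ)]

lemma iIndepSet_lowerLILEvent {μ : Measure (ℕ → Bool)} (hμ : IsFairCoin μ) (hγ : 1 ≤ γ)
    (η : ℝ) : iIndepSet (fun r ↦ lowerLILEvent η γ r) μ := by
  simp_rw [lowerLILEvent_eq_preimage_restrict hγ η]
  exact (hμ.iIndepFun_eval.iIndepFun_restrict_of_pairwise_disjoint
    (fun i ↦ measurable_pi_apply i) (pairwise_disjoint_lilBlock hγ)).iIndepSet_preimage
    fun _ ↦ .of_discrete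

lemma two_mul_lilHalfBlock {r : ℕ} (hr : 2 ≤ r) :
    2 * lilHalfBlock γ r = γ ^ r - γ ^ (r - 1) := by
  obtain ⟨m, rfl⟩ : ∃ m, r = m + 2 := ⟨r - 2, by omega⟩
  have h : γ ^ (m + 2) - γ ^ (m + 2 - 1) = γ ^ m * (γ * (γ - 1)) := by
    rw [show m + 2 - 1 = m + 1 by omega, pow_succ, pow_succ, ← Nat.mul_sub_one, mul_assoc]
  rw [lilHalfBlock, h]
  exact Nat.two_mul_div_two_of_even ((Nat.even_mul_pred_self γ).mul_left _)

lemma card_lilBlock {r : ℕ} (hr : 2 ≤ r) : #(lilBlock γ r) = 2 * lilHalfBlock γ r := by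
  rw [lilBlock, Nat.card_Ico, two_mul_lilHalfBlock hr]

lemma lilHalfBlock_eq (hγ : 1 ≤ γ) {r : ℕ} (hr : 2 ≤ r) :
    (lilHalfBlock γ r : ℝ) = (γ - 1) / (2 * γ) * γ ^ r := by
  have h := congrArg (Nat.cast : ℕ → ℝ) (two_mul_lilHalfBlock (γ := γ) hr)
  have hγ0 : (γ : ℝ) ≠ 0 := by positivity
  have hpow : (γ : ℝ) ^ r = γ ^ (r - 1) * γ := by
    rw [← pow_succ, Nat.sub_add_cancel (by omega)]
  push_cast [Nat.cast_sub (Nat.pow_le_pow_right hγ (r.sub_le 1))] at h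
  field_simp
  linear_combination γ * h + hpow

lemma lowerLILEvent_eq_setOf_sum (hγ : 1 ≤ γ) (η : ℝ) {r : ℕ} (hr : 2 ≤ r) :
    lowerLILEvent η γ r = {X | lilThreshold η γ r <
      ((∑ i ∈ lilBlock γ r, (X i).toNat : ℕ) : ℝ) - lilHalfBlock γ r} := by
  have h := congrArg (Nat.cast : ℕ → ℝ) (two_mul_lilHalfBlock (γ := γ) hr)
  rw [Nat.cast_mul, Nat.cast_sub (Nat.pow_le_pow_right hγ (r.sub_le 1))] at h
  have hcenter : (((γ ^ r : ℕ) : ℝ) - (γ ^ (r - 1) : ℕ)) / 2 = lilHalfBlock γ r := by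
    push_cast at h ⊢
    linarith
  ext X
  simp only [lowerLILEvent, lilThreshold, Set.mem_ofPred_eq, blockIncr_eq_sum hγ, Nat.cast_sum,
    hcenter]

lemma one_le_log_pow (hγ : 2 ≤ γ) {r : ℕ} (hr : 2 ≤ r) : 1 ≤ log ((γ : ℝ) ^ r) := by
  rw [le_log_iff_exp_le (by positivity)]
  calc rexp 1 ≤ 2 ^ 2 := by linarith [exp_one_lt_d9]
    _ ≤ (γ : ℝ) ^ 2 := pow_le_pow_left₀ (by norm_num) (by exact_mod_cast hγ) 2
    _ ≤ (γ : ℝ) ^ r := pow_le_pow_right₀ (by exact_mod_cast (by omega : 1 ≤ γ)) hr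

lemma log_log_pow (hγ : 2 ≤ γ) {r : ℕ} (hr : 1 ≤ r) :
    log (log ((γ : ℝ) ^ r)) = log r + log (log γ) := by
  have hlog : 0 < log (γ : ℝ) := log_pos (by exact_mod_cast hγ)
  rw [log_pow, log_mul (by positivity) hlog.ne']

lemma lilThreshold_sq (hγ : 2 ≤ γ) (η : ℝ) {r : ℕ} (hr : 2 ≤ r) :
    lilThreshold η γ r ^ 2 =
      η ^ 2 * γ / (γ - 1) * lilHalfBlock γ r * log (log ((γ : ℝ) ^ r)) := by
  have hL : 0 ≤ log (log ((γ : ℝ) ^ r)) := log_nonneg (one_le_log_pow hγ hr)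
  have hγ1 : (γ : ℝ) - 1 ≠ 0 := by
    have : (2 : ℝ) ≤ γ := by exact_mod_cast hγ
    linarith
  rw [lilThreshold, mul_pow, sq_sqrt (by positivity), lilHalfBlock_eq (by omega) hr]
  field_simp

lemma tendsto_lilHalfBlock_atTop (hγ : 2 ≤ γ) :
    Tendsto (fun r ↦ (lilHalfBlock γ r : ℝ)) atTop atTop := by
  have hγ1 : (1 : ℝ) < γ := by exact_mod_cast hγ
  have hc : 0 < ((γ : ℝ) - 1) / (2 * γ) := by apply div_pos <;> linarith
  refine ((tendsto_pow_atTop_atTop_of_one_lt hγ1).const_mul_atTop hc).congr' ?_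
  filter_upwards [eventually_ge_atTop 2] with r hr
  rw [lilHalfBlock_eq (by omega) hr]

lemma tendsto_log_log_div_lilHalfBlock (hγ : 2 ≤ γ) :
    Tendsto (fun r ↦ log (log ((γ : ℝ) ^ r)) / lilHalfBlock γ r) atTop (𝓝 0) := by
  have hγ1 : (1 : ℝ) < γ := by exact_mod_cast hγ
  have h := (tendsto_pow_const_div_const_pow_of_one_lt 1 hγ1).const_mul
    (log γ / (((γ : ℝ) - 1) / (2 * γ)))
  rw [mul_zero] at h
  refine squeeze_zero' ?_ ?_ h
  · filter_upwards [eventually_ge_atTop 2] with r hr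
    exact div_nonneg (log_nonneg (one_le_log_pow hγ hr)) (Nat.cast_nonneg _)
  · filter_upwards [eventually_ge_atTop 2] with r hr
    have hL : log (log ((γ : ℝ) ^ r)) ≤ r * log γ := by
      rw [← log_pow]
      exact log_le_self (by linarith [one_le_log_pow hγ hr])
    rw [lilHalfBlock_eq (by omega) hr]
    calc log (log ((γ : ℝ) ^ r)) / ((γ - 1) / (2 * γ) * γ ^ r)
        ≤ r * log γ / ((γ - 1) / (2 * γ) * γ ^ r) := by gcongr
      _ = _ := by rw [pow_one]; field_simp

lemma tendsto_lilWindowBound_div_lilHalfBlock (hγ : 2 ≤ γ) {η : ℝ} (hη : 0 ≤ η) :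
    Tendsto (fun r ↦ lilWindowBound η γ r / lilHalfBlock γ r) atTop (𝓝 0) := by
  have hM := tendsto_lilHalfBlock_atTop hγ
  have h1 : Tendsto
      (fun r ↦ √(η ^ 2 * γ / (γ - 1) * (log (log ((γ : ℝ) ^ r)) / lilHalfBlock γ r)))
      atTop (𝓝 0) := by
    simpa using ((tendsto_log_log_div_lilHalfBlock hγ).const_mul (η ^ 2 * γ / (γ - 1))).sqrt
  have h2 : Tendsto (fun r ↦ (√(lilHalfBlock γ r : ℝ))⁻¹ + (lilHalfBlock γ r : ℝ)⁻¹)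
      atTop (𝓝 0) := by
    simpa using (tendsto_inv_atTop_zero.comp (tendsto_sqrt_atTop.comp hM)).add
      (tendsto_inv_atTop_zero.comp hM)
  rw [← add_zero 0]
  refine (h1.add h2).congr' ?_
  filter_upwards [eventually_ge_atTop 2, hM.eventually_gt_atTop 0] with r hr hM0
  have ht : lilThreshold η γ r / lilHalfBlock γ r =
      √(η ^ 2 * γ / (γ - 1) * (log (log ((γ : ℝ) ^ r)) / lilHalfBlock γ r)) := by
    have ht0 : 0 ≤ lilThreshold η γ r / lilHalfBlock γ r :=
      div_nonneg (mul_nonneg hη (sqrt_nonneg _)) hM0.le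
    rw [← sqrt_sq ht0, div_pow, lilThreshold_sq hγ η hr]
    congr 1
    field_simp
  rw [lilWindowBound, add_div, add_div, ht, sqrt_div_self, add_assoc, one_div]

lemma sq_div_sub_lilWindowBound_le (hγ : 2 ≤ γ) {η ε : ℝ} (hε0 : 0 < ε) (hε1 : ε < 1)
    {r : ℕ} (hr : 2 ≤ r) (hM : 1 ≤ (lilHalfBlock γ r : ℝ))
    (hgap : lilWindowBound η γ r ≤ ε * lilHalfBlock γ r) :
    lilWindowBound η γ r ^ 2 / (lilHalfBlock γ r - lilWindowBound η γ r) ≤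
      (1 + ε) * (η ^ 2 * γ / (γ - 1)) / (1 - ε) * log r +
        ((1 + ε) * (η ^ 2 * γ / (γ - 1)) / (1 - ε) * log (log γ) +
          4 * (1 + ε⁻¹) / (1 - ε)) := by
  have hsqrt : (√(lilHalfBlock γ r : ℝ) + 1) ^ 2 ≤ 4 * lilHalfBlock γ r := by
    nlinarith [sq_sqrt (by linarith : (0 : ℝ) ≤ lilHalfBlock γ r),
      sqrt_nonneg (lilHalfBlock γ r : ℝ)]
  have hγ1 : (γ : ℝ) - 1 ≠ 0 := by
    have : (2 : ℝ) ≤ γ := by exact_mod_cast hγ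
    linarith
  rw [lilWindowBound, add_assoc] at hgap ⊢
  calc _ ≤ ((1 + ε) * lilThreshold η γ r ^ 2 +
          (1 + ε⁻¹) * (√(lilHalfBlock γ r) + 1) ^ 2) / ((1 - ε) * lilHalfBlock γ r) :=
        sq_div_sub_le hε0 hε1 (by linarith) hgap
    _ ≤ ((1 + ε) * (η ^ 2 * γ / (γ - 1) * lilHalfBlock γ r * log (log ((γ : ℝ) ^ r))) +
          (1 + ε⁻¹) * (4 * lilHalfBlock γ r)) / ((1 - ε) * lilHalfBlock γ r) := by
        rw [lilThreshold_sq hγ η hr]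
        gcongr
    _ = _ := by
        rw [log_log_pow hγ (by omega)]
        field_simp
        ring

lemma exp_neg_sq_div_le_measureReal_lowerLILEvent {μ : Measure (ℕ → Bool)}
    (hμ : IsFairCoin μ) (hγ : 1 ≤ γ) {η : ℝ} (hη : 0 ≤ η) {r : ℕ} (hr : 2 ≤ r)
    (hgap : lilWindowBound η γ r < lilHalfBlock γ r) :
    rexp (-(lilWindowBound η γ r ^ 2 / (lilHalfBlock γ r - lilWindowBound η γ r))) / 2 ≤
      μ.real (lowerLILEvent η γ r) := by
  set M := lilHalfBlock γ r
  set t := lilThreshold η γ r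
  set k := ⌊t⌋₊ + 1
  have hk : (k : ℝ) + Nat.sqrt M ≤ lilWindowBound η γ r := by
    rw [lilWindowBound]
    have ht0 : 0 ≤ t := mul_nonneg hη (sqrt_nonneg _)
    have h1 := Nat.floor_le ht0
    have h2 := nat_sqrt_le_real_sqrt (a := M)
    push_cast [k]
    linarith
  have hlt : k + Nat.sqrt M < M := by exact_mod_cast hk.trans_lt hgap
  rw [lowerLILEvent_eq_setOf_sum hγ η hr]
  calc _ ≤ rexp (-(((k : ℝ) + Nat.sqrt M) ^ 2 / (M - ((k : ℝ) + Nat.sqrt M)))) / 2 := by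
        gcongr
    _ ≤ _ := hμ.exp_neg_div_le_measureReal (card_lilBlock hr)
          (by exact_mod_cast Nat.lt_floor_add_one t) (Nat.lt_succ_sqrt' M).le hlt

lemma eventually_rpow_le_measureReal_lowerLILEvent {μ : Measure (ℕ → Bool)}
    (hμ : IsFairCoin μ) (hγ : 2 ≤ γ) {η : ℝ} (hη : 0 < η)
    (hγη : η < ((γ : ℝ) - 1) / γ) :
    ∃ β < (1 : ℝ), ∃ c > (0 : ℝ), ∀ᶠ r : ℕ in atTop,
      c * (r : ℝ) ^ (-β) ≤ μ.real (lowerLILEvent η γ r) := by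
  have hγ2 : (2 : ℝ) ≤ γ := by exact_mod_cast hγ
  have hηγ : η * γ < γ - 1 := (lt_div_iff₀ (by positivity)).1 hγη
  set α := η ^ 2 * γ / (γ - 1)
  have hα0 : 0 < α := div_pos (by positivity) (by linarith)
  have hα1 : α < 1 := (div_lt_one (by linarith)).2 (by nlinarith)
  set ε := (1 - α) / 4 with hε
  have hε0 : 0 < ε := by positivity
  have hε1 : ε < 1 := by linarith
  set β := (1 + ε) * α / (1 - ε)
  have hβ : β < 1 := (div_lt_one (by linarith)).2 (by nlinarith)
  set C := β * log (log γ) + 4 * (1 + ε⁻¹) / (1 - ε)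
  refine ⟨β, hβ, rexp (-C) / 2, by positivity, ?_⟩
  filter_upwards [eventually_ge_atTop 2,
    (tendsto_lilWindowBound_div_lilHalfBlock hγ hη.le).eventually (gt_mem_nhds hε0),
    (tendsto_lilHalfBlock_atTop hγ).eventually_ge_atTop 1] with r hr hgap hM
  have hgap' := ((div_lt_iff₀ (by linarith)).1 hgap).le
  calc rexp (-C) / 2 * (r : ℝ) ^ (-β) = rexp (-(β * log r + C)) / 2 := by
        rw [rpow_def_of_pos (by positivity), div_mul_eq_mul_div, ← exp_add]
        ring_nf
    _ ≤ _ := by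
        gcongr
        exact sq_div_sub_lilWindowBound_le hγ hε0 hε1 hr hM hgap'
    _ ≤ _ := exp_neg_sq_div_le_measureReal_lowerLILEvent hμ (by omega) hη.le hr
        (hgap'.trans_lt (by nlinarith))

end

open ProbabilityTheory in
theorem lowerLILEvent_indep_and_divergent_general (μ : Measure (ℕ → Bool)) (hμ : IsFairCoin μ)
    (η : ℝ) (hη0 : 0 < η)
    (γ : ℕ) (hγ : 2 ≤ γ) (hγη : η < ((γ : ℝ) - 1) / γ) :
    iIndepSet (fun r : ℕ => lowerLILEvent η γ r) μ ∧
    ∑' r : ℕ, μ (lowerLILEvent η γ r) = ⊤ := by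
  obtain ⟨β, hβ, c, hc, hbound⟩ :=
    eventually_rpow_le_measureReal_lowerLILEvent hμ hγ hη0 hγη
  exact ⟨iIndepSet_lowerLILEvent hμ (by omega) η,
    ENNReal.tsum_eq_top_of_eventually_rpow_le hβ.le hc hbound⟩

open ProbabilityTheory in
/-- Divergence of the lower-LIL events: for `0 < η < 1` and a natural number `γ ≥ 2`
with `(γ − 1)/γ > η`, the events `A_r` are mutually independent and `Σ_r μ(A_r) = ∞`. -/
theorem lowerLILEvent_indep_and_divergent (μ : Measure (ℕ → Bool)) (hμ : IsFairCoin μ)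
    (η : ℝ) (hη0 : 0 < η) (hη1 : η < 1)
    (γ : ℕ) (hγ : 2 ≤ γ) (hγη : η < ((γ : ℝ) - 1) / γ) :
    iIndepSet (fun r : ℕ => lowerLILEvent η γ r) μ ∧
    ∑' r : ℕ, μ (lowerLILEvent η γ r) = ⊤ :=
  lowerLILEvent_indep_and_divergent_general μ hμ η hη0 γ hγ hγη
end

section
/- Eventual polynomial-logarithmic bound on the upper-LIL events: let λ > 1 and 1 < γ < λ be reals, let n_r be the integer nearest to γ^r, and for r large enough that log log n_r > 0 define B_r = {X ∈ 2^ℕ : ∃ n with n_r ≤ n ≤ n_{r+1} such that S_n(X) − n/2 > λ·√((n_r/2)·log log n_r)}. Then there exist a constant C > 0 and R ∈ ℕ such that for all r ≥ R, μ(B_r) ≤ C/(log n_r)^λ. -/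
open MeasureTheory Filter

/-!
For the `±1` walk `W_n = 2 S_n - n`, the reflection principle (flip every step after the first
passage through level `m`) gives `#{paths of length N reaching m} ≤ 2 #{paths ending ≥ m}`, and
the exponential Markov bound with `cosh t ≤ exp (t² / 2)` bounds the latter by
`2^N exp (-m² / 2N)`. Hence `μ (max_{n ≤ N} (S_n - n/2) > b) ≤ 2 exp (-2b² / N)`. Since
`n_{r+1} / n_r → γ < λ`, eventually `n_{r+1} ≤ λ n_r`, and with `b = λ √((n_r/2) log log n_r)`
the exponent is at least `λ log log n_r`, so `μ (B_r) ≤ 2 / (log n_r)^λ`.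
-/

open MeasureTheory Filter Finset

lemma card_filter_le_sum_exp {ι : Type*} (s : Finset ι) (f : ι → ℝ) (a : ℝ) {t : ℝ}
    (ht : 0 ≤ t) : (#{x ∈ s | a ≤ f x} : ℝ) ≤ ∑ x ∈ s, Real.exp (t * (f x - a)) := by
  rw [natCast_card_filter]
  refine sum_le_sum fun x _ => ?_
  split_ifs with h
  · exact Real.one_le_exp (mul_nonneg ht (sub_nonneg.2 h))
  · exact (Real.exp_pos _).le

namespace CoinWalk

def walk (X : ℕ → Bool) (n : ℕ) : ℤ := ∑ i ∈ range n, if X i then 1 else -1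

lemma walk_zero (X : ℕ → Bool) : walk X 0 = 0 := by simp [walk]

lemma walk_succ (X : ℕ → Bool) (n : ℕ) :
    walk X (n + 1) = walk X n + if X n then 1 else -1 :=
  sum_range_succ _ n

lemma walk_succ_le (X : ℕ → Bool) (n : ℕ) : walk X (n + 1) ≤ walk X n + 1 := by
  rw [walk_succ]; split_ifs <;> omega

lemma walk_congr {X Y : ℕ → Bool} {n : ℕ} (h : ∀ i < n, X i = Y i) : walk X n = walk Y n :=
  sum_congr rfl fun i hi => by rw [h i (mem_range.1 hi)]

lemma walk_eq_two_mul (X : ℕ → Bool) (n : ℕ) :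
    (walk X n : ℝ) = 2 * (coinSum X n - n / 2) := by
  have hsign : ∀ b : Bool, ((if b then 1 else -1 : ℤ) : ℝ) = 2 * b.toNat - 1 := by
    intro b; cases b <;> norm_num
  simp only [walk, coinSum, Int.cast_sum, hsign, sum_sub_distrib, ← mul_sum, sum_const,
    card_range, nsmul_eq_mul]
  ring

def flipFrom (t : ℕ) (X : ℕ → Bool) : ℕ → Bool := fun i => if t ≤ i then !X i else X i

lemma walk_flipFrom_of_le (X : ℕ → Bool) {t n : ℕ} (h : n ≤ t) :
    walk (flipFrom t X) n = walk X n :=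
  walk_congr fun i hi => by simp [flipFrom, Nat.not_le.2 (hi.trans_le h)]

lemma walk_flipFrom_of_ge (X : ℕ → Bool) {t n : ℕ} (h : t ≤ n) :
    walk (flipFrom t X) n = 2 * walk X t - walk X n := by
  induction n, h using Nat.le_induction with
  | base => rw [walk_flipFrom_of_le X le_rfl]; ring
  | succ n hn ih =>
    rw [walk_succ, walk_succ, ih]
    simp only [flipFrom, if_pos hn]
    cases X n <;> simp <;> ring

variable {m : ℤ} {X Y : ℕ → Bool}

variable (m) in
/-- Junk value `sInf ∅ = 0` for paths that never reach `m`. -/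
noncomputable def hitTime (X : ℕ → Bool) : ℕ := sInf {n | m ≤ walk X n}

variable (m) in
noncomputable def reflect (X : ℕ → Bool) : ℕ → Bool := flipFrom (hitTime m X) X

lemma hitTime_le {n : ℕ} (h : m ≤ walk X n) : hitTime m X ≤ n := Nat.sInf_le h

lemma walk_hitTime (hm : 0 < m) (h : ∃ n, m ≤ walk X n) : walk X (hitTime m X) = m := by
  have hge : m ≤ walk X (hitTime m X) := Nat.sInf_mem h
  obtain ⟨k, hk⟩ : ∃ k, hitTime m X = k + 1 := by
    refine Nat.exists_eq_add_one.2 (Nat.pos_of_ne_zero fun h0 => ?_)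
    rw [h0, walk_zero] at hge; omega
  have hlt : walk X k < m :=
    not_le.1 (Nat.notMem_of_lt_sInf (hk ▸ Nat.lt_succ_self k : k < hitTime m X))
  have := walk_succ_le X k
  rw [hk] at hge ⊢; omega

lemma hitTime_eq_of_walk_eq (h : ∃ n, m ≤ walk X n)
    (hY : ∀ n ≤ hitTime m X, walk Y n = walk X n) : hitTime m Y = hitTime m X := by
  have hX : m ≤ walk X (hitTime m X) := Nat.sInf_mem h
  refine le_antisymm (hitTime_le (by rwa [hY _ le_rfl]))
    (le_csInf ⟨hitTime m X, ?_⟩ fun s hs => ?_)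
  · show m ≤ walk Y _; rwa [hY _ le_rfl]
  · by_contra! hlt
    exact Nat.notMem_of_lt_sInf hlt (show m ≤ walk X s by rwa [← hY s hlt.le])

lemma walk_reflect_of_ge (hm : 0 < m) (h : ∃ n, m ≤ walk X n) {n : ℕ}
    (hn : hitTime m X ≤ n) : walk (reflect m X) n = 2 * m - walk X n := by
  rw [reflect, walk_flipFrom_of_ge X hn, walk_hitTime hm h]

variable {N : ℕ}

def extendFalse (v : Fin N → Bool) : ℕ → Bool := fun i => if h : i < N then v ⟨i, h⟩ else false

lemma extendFalse_of_lt (v : Fin N → Bool) {i : ℕ} (h : i < N) : extendFalse v i = v ⟨i, h⟩ :=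
  dif_pos h

lemma walk_extendFalse_restrict (X : ℕ → Bool) {n : ℕ} (hn : n ≤ N) :
    walk (extendFalse fun i : Fin N => X i) n = walk X n :=
  walk_congr fun _ hi => extendFalse_of_lt _ (hi.trans_le hn)

lemma walk_extendFalse (v : Fin N → Bool) :
    walk (extendFalse v) N = ∑ i, if v i then 1 else -1 := by
  rw [walk, ← Fin.sum_univ_eq_sum_range (fun i => if extendFalse v i then (1 : ℤ) else -1)]
  simp only [extendFalse_of_lt v (Fin.is_lt _)]

variable (m) in
noncomputable def reflectPrefix (v : Fin N → Bool) : Fin N → Bool :=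
  fun i => reflect m (extendFalse v) i

lemma walk_extendFalse_reflectPrefix (v : Fin N → Bool) {n : ℕ} (hn : n ≤ N) :
    walk (extendFalse (reflectPrefix m v)) n = walk (reflect m (extendFalse v)) n :=
  walk_extendFalse_restrict _ hn

lemma hitTime_reflectPrefix {v : Fin N → Bool} (hv : ∃ n ≤ N, m ≤ walk (extendFalse v) n) :
    hitTime m (extendFalse (reflectPrefix m v)) = hitTime m (extendFalse v) := by
  obtain ⟨n, hnN, hn⟩ := hv
  refine hitTime_eq_of_walk_eq ⟨n, hn⟩ fun k hk => ?_
  rw [walk_extendFalse_reflectPrefix v (hk.trans ((hitTime_le hn).trans hnN)), reflect,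
    walk_flipFrom_of_le _ hk]

lemma reflectPrefix_reflectPrefix {v : Fin N → Bool}
    (hv : ∃ n ≤ N, m ≤ walk (extendFalse v) n) : reflectPrefix m (reflectPrefix m v) = v := by
  funext i
  simp only [reflectPrefix, reflect, flipFrom, hitTime_reflectPrefix hv,
    extendFalse_of_lt _ i.is_lt]
  split_ifs <;> simp

lemma card_exists_le_walk_le (hm : 0 < m) (N : ℕ) :
    #{v : Fin N → Bool | ∃ n ≤ N, m ≤ walk (extendFalse v) n}
      ≤ 2 * #{v : Fin N → Bool | m ≤ walk (extendFalse v) N} := by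
  set H := ({v | ∃ n ≤ N, m ≤ walk (extendFalse v) n} : Finset (Fin N → Bool))
  set E := ({v | m ≤ walk (extendFalse v) N} : Finset (Fin N → Bool))
  have hsplit := card_filter_add_card_filter_not (s := H) fun v => m ≤ walk (extendFalse v) N
  have hE : H.filter (fun v => m ≤ walk (extendFalse v) N) = E := by
    ext v; simp only [H, E, mem_filter, mem_univ, true_and, and_iff_right_iff_imp]
    exact fun h => ⟨N, le_rfl, h⟩
  have hreflect : #(H.filter fun v => ¬m ≤ walk (extendFalse v) N) ≤ #E := by
    refine card_le_card_of_injOn (reflectPrefix m) (fun v hv => ?_) fun v hv w hw hvw => ?_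
    · simp only [H, E, coe_filter, mem_filter, mem_univ, true_and, Set.mem_ofPred_eq] at hv ⊢
      obtain ⟨⟨n, hnN, hn⟩, hend⟩ := hv
      rw [walk_extendFalse_reflectPrefix v le_rfl,
        walk_reflect_of_ge hm ⟨n, hn⟩ ((hitTime_le hn).trans hnN)]
      omega
    · simp only [H, coe_filter, mem_filter, mem_univ, true_and, Set.mem_ofPred_eq] at hv hw
      rw [← reflectPrefix_reflectPrefix hv.1, hvw, reflectPrefix_reflectPrefix hw.1]
  rw [hE] at hsplit
  omega

lemma sum_exp_mul_sum_sign (N : ℕ) (t : ℝ) :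
    ∑ v : Fin N → Bool, Real.exp (t * ∑ i, if v i then 1 else -1) = (2 * Real.cosh t) ^ N := by
  simp only [mul_sum, Real.exp_sum]
  rw [← Fintype.prod_sum (fun (_ : Fin N) (b : Bool) => Real.exp (t * if b then 1 else -1)),
    prod_const, card_univ, Fintype.card_fin, Fintype.sum_bool, Real.cosh_eq]
  congr 1
  simp only [if_true, mul_one, Bool.false_eq_true, if_false, mul_neg]
  ring

lemma card_walk_ge_le (N : ℕ) (hm : 0 ≤ m) :
    (#{v : Fin N → Bool | m ≤ walk (extendFalse v) N} : ℝ)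
      ≤ 2 ^ N * Real.exp (-m ^ 2 / (2 * N)) := by
  rcases N.eq_zero_or_pos with rfl | hN
  · simpa using card_le_univ (α := Fin 0 → Bool) _
  set t : ℝ := m / N
  have hwalk : ∀ v : Fin N → Bool,
      ((walk (extendFalse v) N : ℤ) : ℝ) = ∑ i, if v i then 1 else -1 := fun v => by
    rw [walk_extendFalse]; push_cast; rfl
  calc _ ≤ ∑ v : Fin N → Bool, Real.exp (t * ((walk (extendFalse v) N : ℝ) - m)) := by
        simpa only [Int.cast_le] using
          card_filter_le_sum_exp univ (fun v => (walk (extendFalse v) N : ℝ)) m (by positivity)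
    _ = Real.exp (-(t * m)) * (2 * Real.cosh t) ^ N := by
        rw [← sum_exp_mul_sum_sign, mul_sum]
        refine sum_congr rfl fun v _ => ?_
        rw [hwalk, ← Real.exp_add]
        ring_nf
    _ ≤ Real.exp (-(t * m)) * (2 * Real.exp (t ^ 2 / 2)) ^ N := by
        gcongr; exact Real.cosh_le_exp_half_sq t
    _ = 2 ^ N * Real.exp (-m ^ 2 / (2 * N)) := by
        rw [mul_pow, ← Real.exp_nat_mul, mul_left_comm, ← Real.exp_add]
        congr 2
        simp only [t]
        field_simp
        ring

end CoinWalk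

open CoinWalk

lemma IsFairCoin.measure_le_card_div {μ : Measure (ℕ → Bool)} (hμ : IsFairCoin μ) {N : ℕ}
    {S : Set (ℕ → Bool)} (H : Finset (Fin N → Bool))
    (hS : ∀ X ∈ S, (fun i : Fin N => X i) ∈ H) :
    μ S ≤ ENNReal.ofReal (#H / 2 ^ N) := by
  have hcover : S ⊆ ⋃ v ∈ H, {X | ∀ i ∈ range N, X i = extendFalse v i} := fun X hX =>
    Set.mem_biUnion (hS X hX) fun i hi => by rw [extendFalse_of_lt _ (mem_range.1 hi)]
  calc μ S ≤ ∑ v ∈ H, μ {X | ∀ i ∈ range N, X i = extendFalse v i} :=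
        (measure_mono hcover).trans (measure_biUnion_finset_le _ _)
    _ = #H * (1 / 2) ^ N := by simp only [hμ.2, card_range, sum_const, nsmul_eq_mul]
    _ = ENNReal.ofReal (#H / 2 ^ N) := by
        rw [ENNReal.ofReal_div_of_pos (by positivity), ENNReal.ofReal_natCast,
          ENNReal.ofReal_pow zero_le_two, ENNReal.ofReal_ofNat, one_div,
          ← ENNReal.inv_pow, div_eq_mul_inv]

theorem IsFairCoin.measure_exists_coinSum_gt_le {μ : Measure (ℕ → Bool)} (hμ : IsFairCoin μ)
    (N : ℕ) {b : ℝ} (hb : 0 ≤ b) :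
    μ {X | ∃ n ≤ N, b < coinSum X n - n / 2}
      ≤ ENNReal.ofReal (2 * Real.exp (-2 * b ^ 2 / N)) := by
  set m : ℤ := ⌊2 * b⌋ + 1
  have hm : 2 * b < m := by push_cast [m]; exact Int.lt_floor_add_one _
  have hm0 : 0 < m := by have := Int.floor_nonneg.2 (by linarith : 0 ≤ 2 * b); omega
  refine (hμ.measure_le_card_div {v : Fin N → Bool | ∃ n ≤ N, m ≤ walk (extendFalse v) n}
    fun X hX => ?_).trans (ENNReal.ofReal_le_ofReal ?_)
  · obtain ⟨n, hnN, hn⟩ := hX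
    simp only [mem_filter, mem_univ, true_and]
    refine ⟨n, hnN, ?_⟩
    rw [walk_extendFalse_restrict X hnN, Int.add_one_le_iff, Int.floor_lt, walk_eq_two_mul]
    linarith
  · have hreflect : (#{v : Fin N → Bool | ∃ n ≤ N, m ≤ walk (extendFalse v) n} : ℝ)
        ≤ 2 * #{v : Fin N → Bool | m ≤ walk (extendFalse v) N} := by
      exact_mod_cast card_exists_le_walk_le hm0 N
    have hexp : Real.exp (-m ^ 2 / (2 * N)) ≤ Real.exp (-2 * b ^ 2 / N) := by
      rw [Real.exp_le_exp, show -2 * b ^ 2 / N = -(2 * b) ^ 2 / (2 * N) by ring]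
      exact div_le_div_of_nonneg_right (by nlinarith) (by positivity)
    rw [div_le_iff₀ (by positivity)]
    calc _ ≤ _ := hreflect
      _ ≤ 2 * (2 ^ N * Real.exp (-m ^ 2 / (2 * N))) := by
          gcongr; exact card_walk_ge_le N hm0.le
      _ ≤ 2 * Real.exp (-2 * b ^ 2 / N) * 2 ^ N := by
          nlinarith [pow_pos (two_pos : (0 : ℝ) < 2) N]

lemma abs_nearestNat_sub_le {γ : ℝ} (hγ : 0 ≤ γ) (r : ℕ) :
    |(nearestNat γ r : ℝ) - γ ^ r| ≤ 1 / 2 := by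
  have hround : 0 ≤ round (γ ^ r) := by
    rw [round_eq]; exact Int.floor_nonneg.2 (by positivity)
  rw [nearestNat, ← Int.cast_natCast, Int.toNat_of_nonneg hround, abs_sub_comm]
  exact abs_sub_round _

lemma abs_nearestNat_succ_sub_le {γ : ℝ} (hγ : 0 ≤ γ) (r : ℕ) :
    |(nearestNat γ (r + 1) : ℝ) - γ * nearestNat γ r| ≤ (γ + 1) / 2 := by
  have hsplit : (nearestNat γ (r + 1) : ℝ) - γ * nearestNat γ r
      = ((nearestNat γ (r + 1) : ℝ) - γ ^ (r + 1)) - γ * ((nearestNat γ r : ℝ) - γ ^ r) := by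
    ring
  rw [hsplit]
  refine (abs_sub _ _).trans ?_
  rw [abs_mul, abs_of_nonneg hγ]
  nlinarith [abs_nearestNat_sub_le hγ (r + 1), abs_nearestNat_sub_le hγ r]

lemma tendsto_nearestNat_atTop {γ : ℝ} (hγ : 1 < γ) :
    Tendsto (fun r => (nearestNat γ r : ℝ)) atTop atTop :=
  tendsto_atTop_mono (fun r => by linarith [abs_le.1 (abs_nearestNat_sub_le (by positivity) r)])
    (tendsto_atTop_add_const_right _ (-(1 / 2)) (tendsto_pow_atTop_atTop_of_one_lt hγ))

lemma exp_neg_le_one_div_log_rpow {n N lam : ℝ} (hn : 3 ≤ n) (hN : 0 < N) (hlam : 0 < lam)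
    (hNn : N ≤ lam * n) :
    Real.exp (-2 * (lam * √(n / 2 * Real.log (Real.log n))) ^ 2 / N)
      ≤ 1 / Real.log n ^ lam := by
  have hlog : 1 < Real.log n := by
    rw [Real.lt_log_iff_exp_lt (by linarith)]
    linarith [Real.exp_one_lt_d9]
  have hloglog : 0 ≤ Real.log (Real.log n) := Real.log_nonneg hlog.le
  rw [Real.rpow_def_of_pos (by linarith), one_div, ← Real.exp_neg, Real.exp_le_exp,
    mul_pow, Real.sq_sqrt (by positivity), neg_mul, neg_div, neg_le_neg_iff,
    le_div_iff₀ hN]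
  nlinarith [mul_nonneg hlam.le hloglog]

/-- Eventual polynomial-logarithmic bound on the upper-LIL events: for `1 < γ < λ`,
there are a constant `C > 0` and `R` such that `μ(B_r) ≤ C / (log n_r)^λ` for all
`r ≥ R`. -/
theorem upperLILEvent_measure_le (μ : Measure (ℕ → Bool)) (hμ : IsFairCoin μ)
    (lam γ : ℝ) (hγ : 1 < γ) (hγlam : γ < lam) :
    ∃ C : ℝ, 0 < C ∧ ∃ R : ℕ, ∀ r : ℕ, R ≤ r →
      μ (upperLILEvent lam γ r)
        ≤ ENNReal.ofReal (C / Real.log (nearestNat γ r) ^ lam) := by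
  have hlam : 0 < lam := by linarith
  have hlim := tendsto_nearestNat_atTop hγ
  obtain ⟨R, hR⟩ := eventually_atTop.1
    ((hlim.eventually_ge_atTop 3).and (hlim.eventually_ge_atTop ((γ + 1) / 2 / (lam - γ))))
  refine ⟨2, two_pos, R, fun r hr => ?_⟩
  obtain ⟨hn3, hgap⟩ := hR r hr
  rw [div_le_iff₀ (sub_pos.2 hγlam)] at hgap
  have hsucc := abs_le.1 (abs_nearestNat_succ_sub_le (by positivity) r)
  calc μ (upperLILEvent lam γ r)
      ≤ μ {X | ∃ n ≤ nearestNat γ (r + 1),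
          lam * √(nearestNat γ r / 2 * Real.log (Real.log (nearestNat γ r)))
            < coinSum X n - n / 2} :=
        measure_mono fun X ⟨n, _, hn, hX⟩ => ⟨n, hn, hX⟩
    _ ≤ _ := hμ.measure_exists_coinSum_gt_le _ (mul_nonneg hlam.le (Real.sqrt_nonneg _))
    _ ≤ _ := by
        refine ENNReal.ofReal_le_ofReal ?_
        have hdecay := exp_neg_le_one_div_log_rpow (N := nearestNat γ (r + 1)) hn3
          (by nlinarith) hlam (by nlinarith)
        exact (mul_le_mul_of_nonneg_left hdecay zero_le_two).trans_eq (mul_one_div _ _)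
end
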